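/- arXiv:1701.03948 — 8 statements merged into one kernel-verified Lean document; each statement's English description precedes it below -/
import Mathlib

section
/- Let (f, I, U) be a safety verification problem. If there exists a barrier certificate β of (f, I, U), then (f, I, U) is safe, i.e. R_f(I) ∩ U = ∅. -/
open Set
open scoped RealInnerProductSpace

noncomputable section

/-- `reach f ε T X` is the set of points `ε`-reachable from `X` at some time `t ∈ T`:
there is a differentiable curve `x` with `x 0 ∈ X`, `x t = y`, and
`‖x' s - f (x s)‖ ≤ ε` for all `s ∈ [0, t]`. -/
def reach {n : ℕ} (f : EuclideanSpace ℝ (Fin n) → EuclideanSpace ℝ (Fin n))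
    (ε : ℝ) (T : Set ℝ) (X : Set (EuclideanSpace ℝ (Fin n))) :
    Set (EuclideanSpace ℝ (Fin n)) :=
  {y | ∃ t ∈ T, ∃ x : ℝ → EuclideanSpace ℝ (Fin n),
      Differentiable ℝ x ∧ x 0 ∈ X ∧ x t = y ∧
      ∀ s ∈ Set.Icc (0 : ℝ) t, ‖deriv x s - f (x s)‖ ≤ ε}

/-- If a safety verification problem has a barrier certificate, then it is safe. -/
theorem barrier_certificate_implies_safe {n : ℕ}
    (f : EuclideanSpace ℝ (Fin n) → EuclideanSpace ℝ (Fin n)) (hf : ContDiff ℝ (⊤ : ℕ∞) f)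
    (I U : Set (EuclideanSpace ℝ (Fin n)))
    (h : ∃ β : EuclideanSpace ℝ (Fin n) → ℝ,
      Differentiable ℝ β ∧
      (∀ x ∈ I, 0 ≤ β x) ∧
      (∀ x, β x = 0 → 0 < ⟪gradient β x, f x⟫) ∧
      (∀ x, 0 ≤ β x → x ∉ U)) :
    reach f 0 (Set.Ici 0) I ∩ U = ∅ := by
  obtain ⟨β, hβd, hI, hbar, hU⟩ := h
  ext y
  simp only [mem_inter_iff, mem_empty_iff_false, iff_false, not_and]
  rintro ⟨t, ht, x, hx, hx0, hxt, hbound⟩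
  apply hU
  subst hxt
  rw [mem_Ici] at ht
  set g : ℝ → ℝ := fun s => β (x s) with hg
  have hderiv : ∀ s ∈ Icc (0:ℝ) t, HasDerivAt g (⟪gradient β (x s), f (x s)⟫) s := by
    intro s hs
    have hxd : HasDerivAt x (deriv x s) s := (hx s).hasDerivAt
    have hfx : deriv x s = f (x s) := by
      have := hbound s hs
      rwa [norm_le_zero_iff, sub_eq_zero] at this
    have hgrad := (hβd (x s)).hasGradientAt
    have h2 := hgrad.hasFDerivAt.comp_hasDerivAt s hxd
    rw [hfx] at h2
    simpa [hg, Function.comp_def] using h2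
  have hcont : Continuous g := (hβd.comp hx).continuous
  have hg0 : 0 ≤ g 0 := hI _ hx0
  by_contra hneg
  push_neg at hneg
  have hgt : g t < 0 := hneg
  set S : Set ℝ := Icc (0:ℝ) t ∩ {s | 0 ≤ g s} with hSdef
  have hSne : S.Nonempty := ⟨0, ⟨le_refl 0, ht⟩, hg0⟩
  have hSbdd : BddAbove S := ⟨t, fun s hs => hs.1.2⟩
  have hSclosed : IsClosed S := isClosed_Icc.inter (isClosed_le continuous_const hcont)
  set s₀ : ℝ := sSup S with hs₀def
  have hs₀S : s₀ ∈ S := hSclosed.csSup_mem hSne hSbdd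
  have hs₀0 : 0 ≤ s₀ := hs₀S.1.1
  have hgs₀ : 0 ≤ g s₀ := hs₀S.2
  have hs₀t : s₀ < t := lt_of_le_of_ne hs₀S.1.2 (by intro heq; rw [heq] at hgs₀; exact absurd hgs₀ (not_le.2 hgt))
  have hright : ∀ s ∈ Ioc s₀ t, g s < 0 := by
    intro s hs
    by_contra hge
    push_neg at hge
    have hsS : s ∈ S := ⟨⟨hs₀0.trans hs.1.le, hs.2⟩, hge⟩
    exact absurd (le_csSup hSbdd hsS) (not_le.2 hs.1)
  have hgs₀0 : g s₀ = 0 := by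
    refine le_antisymm ?_ hgs₀
    have htend : Filter.Tendsto g (nhdsWithin s₀ (Ioi s₀)) (nhds (g s₀)) :=
      (hcont.tendsto s₀).mono_left nhdsWithin_le_nhds
    refine le_of_tendsto htend ?_
    filter_upwards [Ioc_mem_nhdsGT_of_mem ⟨le_refl s₀, hs₀t⟩] with s hs
    exact (hright s hs).le
  have hd : 0 < ⟪gradient β (x s₀), f (x s₀)⟫ := hbar _ hgs₀0
  have hhd : HasDerivAt g (⟪gradient β (x s₀), f (x s₀)⟫) s₀ :=
    hderiv s₀ ⟨hs₀0, hs₀t.le⟩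
  have hslope := hasDerivAt_iff_tendsto_slope.1 hhd
  have hev : ∀ᶠ s in nhdsWithin s₀ (Ioi s₀), 0 < slope g s₀ s := by
    have : ∀ᶠ s in nhdsWithin s₀ {s₀}ᶜ, 0 < slope g s₀ s :=
      hslope.eventually (Filter.Tendsto.eventually_const_lt hd Filter.tendsto_id)
    exact this.filter_mono (nhdsWithin_mono s₀ (fun s hs => ne_of_gt hs))
  have hev2 : ∀ᶠ s in nhdsWithin s₀ (Ioi s₀), s ∈ Ioc s₀ t :=
    Ioc_mem_nhdsGT_of_mem ⟨le_refl s₀, hs₀t⟩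
  obtain ⟨s, hs1, hs2⟩ := (hev.and hev2).exists
  have : 0 < g s - g s₀ := by
    have hpos : 0 < s - s₀ := sub_pos.2 hs2.1
    have := mul_pos hs1 hpos
    rwa [slope_def_field, div_mul_cancel₀] at this
    exact ne_of_gt hpos
  rw [hgs₀0] at this
  exact absurd (hright s hs2) (not_lt.2 (by linarith))
end
end

section
/- Let f : ℝⁿ → ℝⁿ be smooth, let 0 ≤ ε < ε̂, let Δ > 0, and let p, p' ∈ ℝⁿ be such that p' ∈ R_{f,ε}^{Δ}({p}), i.e. p' is ε-reachable from p at time Δ. Then there exists δ > 0 such that every point whose Euclidean distance to p' is less than δ lies in R_{f,ε̂}^{Δ}({p}). -/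
open Set
open scoped RealInnerProductSpace

noncomputable section

/-- If p' is ε-reachable from p at time Δ, then a whole neighborhood of p' is
ε̂-reachable from p at time Δ, for any ε̂ > ε. -/
theorem neighborhood_reachable {n : ℕ}
    (f : EuclideanSpace ℝ (Fin n) → EuclideanSpace ℝ (Fin n)) (hf : ContDiff ℝ (⊤ : ℕ∞) f)
    (ε εhat Δ : ℝ) (hε : 0 ≤ ε) (hεhat : ε < εhat) (hΔ : 0 < Δ)
    (p p' : EuclideanSpace ℝ (Fin n))
    (hp' : p' ∈ reach f ε {Δ} {p}) :
    ∃ δ > 0, ∀ q : EuclideanSpace ℝ (Fin n), dist q p' < δ → q ∈ reach f εhat {Δ} {p} := by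
  obtain ⟨t, ht, x, hxdiff, hx0, hxt, hxbound⟩ := hp'
  rw [mem_singleton_iff] at ht
  subst ht
  rw [mem_singleton_iff] at hx0
  -- the image of the curve is bounded
  have hKc : IsCompact (x '' Icc 0 t) := isCompact_Icc.image hxdiff.continuous
  obtain ⟨r, hr⟩ := hKc.isBounded.subset_closedBall p'
  set C : Set (EuclideanSpace ℝ (Fin n)) := Metric.closedBall p' (r + 1) with hC
  have hCc : IsCompact C := isCompact_closedBall _ _
  have hCconv : Convex ℝ C := convex_closedBall _ _
  -- bound on the derivative of f on C
  have hfc : Continuous (fderiv ℝ f) := hf.continuous_fderiv (by simp)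
  obtain ⟨M, hM⟩ := hCc.exists_bound_of_continuousOn (hfc.continuousOn (s := C))
  set M' : ℝ := max M 0 with hM'
  have hM'0 : 0 ≤ M' := le_max_right _ _
  have hMle : ∀ a ∈ C, ‖fderiv ℝ f a‖ ≤ M' := fun a ha => (hM a ha).trans (le_max_left _ _)
  -- Lipschitz bound for f on C
  have hlip : ∀ a ∈ C, ∀ b ∈ C, ‖f b - f a‖ ≤ M' * ‖b - a‖ := fun a ha b hb =>
    Convex.norm_image_sub_le_of_norm_fderiv_le (fun z _ => hf.differentiable (by simp) z)
      hMle hCconv ha hb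
  -- choose δ
  have hden : (0 : ℝ) < 1 / t + M' + 1 := by positivity
  refine ⟨min 1 ((εhat - ε) / (1 / t + M' + 1)), lt_min one_pos (div_pos (by linarith) hden), ?_⟩
  intro q hq
  set v : EuclideanSpace ℝ (Fin n) := q - p' with hv
  have hvnorm : ‖v‖ ≤ min 1 ((εhat - ε) / (1 / t + M' + 1)) := by
    rw [hv, ← dist_eq_norm]; exact hq.le
  have hv1 : ‖v‖ ≤ 1 := hvnorm.trans (min_le_left _ _)
  have hv2 : ‖v‖ ≤ (εhat - ε) / (1 / t + M' + 1) := hvnorm.trans (min_le_right _ _)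
  set y : ℝ → EuclideanSpace ℝ (Fin n) := fun s => x s + (s / t) • v with hy
  -- derivative of y
  have hder : ∀ s : ℝ, HasDerivAt y (deriv x s + (1 / t) • v) s := by
    intro s
    have h1 : HasDerivAt x (deriv x s) s := (hxdiff s).hasDerivAt
    have h2 : HasDerivAt (fun s : ℝ => (s / t) • v) ((1 / t) • v) s := by
      simpa using ((hasDerivAt_id s).div_const t).smul_const v
    exact h1.add h2
  have hydiff : Differentiable ℝ y := fun s => (hder s).differentiableAt
  refine ⟨t, rfl, y, hydiff, ?_, ?_, ?_⟩
  · simp [hy, hx0]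
  · simp [hy, div_self hΔ.ne', hxt, hv]
  · intro s hs
    have hxr : dist (x s) p' ≤ r := hr ⟨s, hs, rfl⟩
    have hxC : x s ∈ C := Metric.mem_closedBall.2 (by linarith)
    have hsd : 0 ≤ s / t := div_nonneg hs.1 hΔ.le
    have hsd1 : s / t ≤ 1 := (div_le_one hΔ).2 hs.2
    have hyx : ‖y s - x s‖ ≤ ‖v‖ := by
      have : y s - x s = (s / t) • v := by simp [hy]
      rw [this, norm_smul, Real.norm_eq_abs, abs_of_nonneg hsd]
      nlinarith [norm_nonneg v]
    have hyC : y s ∈ C := by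
      rw [hC, Metric.mem_closedBall]
      calc dist (y s) p' ≤ dist (y s) (x s) + dist (x s) p' := dist_triangle _ _ _
        _ ≤ r + 1 := by
          rw [dist_eq_norm]
          linarith [hyx.trans hv1]
    have hdy : deriv y s = deriv x s + (1 / t) • v := (hder s).deriv
    have key : deriv y s - f (y s)
        = (deriv x s - f (x s)) + ((1 / t) • v + (f (x s) - f (y s))) := by
      rw [hdy]; abel
    rw [key]
    have b1 : ‖deriv x s - f (x s)‖ ≤ ε := hxbound s hs
    have b2 : ‖(1 / t) • v‖ ≤ (1 / t) * ‖v‖ := by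
      rw [norm_smul, Real.norm_eq_abs, abs_of_nonneg (by positivity)]
    have b3 : ‖f (x s) - f (y s)‖ ≤ M' * ‖v‖ := by
      calc ‖f (x s) - f (y s)‖ ≤ M' * ‖x s - y s‖ := hlip (y s) hyC (x s) hxC
        _ ≤ M' * ‖v‖ := by
          have : ‖x s - y s‖ = ‖y s - x s‖ := norm_sub_rev _ _
          rw [this]; exact mul_le_mul_of_nonneg_left hyx hM'0
    have hvd : (1 / t + M' + 1) * ‖v‖ ≤ εhat - ε := by
      rw [← le_div_iff₀' hden]; exact hv2
    calc ‖(deriv x s - f (x s)) + ((1 / t) • v + (f (x s) - f (y s)))‖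
        ≤ ‖deriv x s - f (x s)‖ + (‖(1 / t) • v‖ + ‖f (x s) - f (y s)‖) :=
          (norm_add_le _ _).trans (by gcongr; exact norm_add_le _ _)
      _ ≤ ε + ((1 / t) * ‖v‖ + M' * ‖v‖) := by gcongr
      _ ≤ εhat := by nlinarith [norm_nonneg v]
end
end

section
/- Let f : ℝⁿ → ℝⁿ be smooth and let Ω ⊆ ℝⁿ be compact. Then for every ε > 0 and every Δ > 0 there exists δ > 0 such that for all p, p' ∈ Ω with p' in the topological closure of R_{f,ε/2}^{Δ}({p}), every point whose Euclidean distance to p' is less than δ lies in R_{f,ε}^{Δ}({p}). -/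
open Set
open scoped RealInnerProductSpace

noncomputable section

lemma hasDerivAt_maxsq (t : ℝ) : HasDerivAt (fun u : ℝ => max u 0 ^ 2) (2 * max t 0) t := by
  rcases lt_trichotomy t 0 with h | h | h
  · have : (fun u : ℝ => max u 0 ^ 2) =ᶠ[nhds t] fun _ => (0:ℝ) := by
      filter_upwards [Iio_mem_nhds h] with u hu
      simp [max_eq_right (le_of_lt (mem_Iio.mp hu))]
    have h0 : HasDerivAt (fun _ : ℝ => (0:ℝ)) 0 t := hasDerivAt_const t 0
    have := h0.congr_of_eventuallyEq this
    simpa [max_eq_right h.le] using this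
  · subst h
    rw [hasDerivAt_iff_tendsto_slope]
    have hcong : slope (fun u : ℝ => max u 0 ^ 2) 0 =ᶠ[nhdsWithin 0 {(0:ℝ)}ᶜ] fun u => max u 0 := by
      filter_upwards [self_mem_nhdsWithin] with u hu
      have hu' : u ≠ 0 := hu
      rcases le_or_gt u 0 with h | h
      · simp [slope, max_eq_right h, hu']
      · rw [slope_def_field]
        field_simp [slope, max_eq_left h.le, hu']
        rw [max_eq_left h.le, max_self]
        ring
    rw [Filter.tendsto_congr' hcong]
    have : Filter.Tendsto (fun u : ℝ => max u 0) (nhds 0) (nhds 0) := by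
      have hc : Continuous (fun u : ℝ => max u 0) := continuous_id.max continuous_const
      simpa using hc.tendsto (0:ℝ)
    simpa using this.mono_left nhdsWithin_le_nhds
  · have : (fun u : ℝ => max u 0 ^ 2) =ᶠ[nhds t] fun u => u ^ 2 := by
      filter_upwards [Ioi_mem_nhds h] with u hu
      simp [max_eq_left (le_of_lt (mem_Ioi.mp hu))]
    have h0 : HasDerivAt (fun u : ℝ => u ^ 2) (2 * t) t := by
      simpa using hasDerivAt_pow 2 t
    have := h0.congr_of_eventuallyEq this
    simpa [max_eq_left h.le] using this

lemma hasDerivAt_maxsq_shift (a t : ℝ) :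
    HasDerivAt (fun u : ℝ => max (u - a) 0 ^ 2) (2 * max (t - a) 0) t := by
  have h1 : HasDerivAt (fun u : ℝ => u - a) 1 t := (hasDerivAt_id t).sub_const a
  have := (hasDerivAt_maxsq (t - a)).comp t h1
  simpa [Function.comp_def] using this

/-- A C¹ ramp function: vanishes (with derivative) on `(-∞, a]`, reaches `1` at `a + σ`,
with values in `[0,1]` and derivative in `[0, 2/σ]` on `[a, a+σ]`. -/
lemma exists_ramp (a σ : ℝ) (hσ : 0 < σ) :
    ∃ lam lam' : ℝ → ℝ, (∀ s, HasDerivAt lam (lam' s) s) ∧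
      (∀ s ≤ a, lam s = 0 ∧ lam' s = 0) ∧ lam (a + σ) = 1 ∧
      (∀ s, a ≤ s → s ≤ a + σ →
        0 ≤ lam s ∧ lam s ≤ 1 ∧ 0 ≤ lam' s ∧ lam' s ≤ 2/σ) := by
  refine ⟨fun s => max (s - a) 0 ^ 2 / σ^2, fun s => 2 * max (s - a) 0 / σ^2,
    fun s => (hasDerivAt_maxsq_shift a s).div_const (σ^2), ?_, ?_, ?_⟩
  · intro s hs
    have h0 : max (s - a) 0 = 0 := max_eq_right (by linarith)
    simp [h0]
  · show max (a + σ - a) 0 ^ 2 / σ^2 = 1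
    have h1 : max (a + σ - a) 0 = σ := by
      rw [max_eq_left (by linarith)]; ring
    rw [h1]
    field_simp
  · intro s h1 h2
    have hm : max (s - a) 0 = s - a := max_eq_left (by linarith)
    show 0 ≤ max (s - a) 0 ^ 2 / σ^2 ∧ max (s - a) 0 ^ 2 / σ^2 ≤ 1 ∧
      0 ≤ 2 * max (s - a) 0 / σ^2 ∧ 2 * max (s - a) 0 / σ^2 ≤ 2/σ
    rw [hm]
    refine ⟨by positivity, ?_, div_nonneg (by linarith) (by positivity), ?_⟩
    · rw [div_le_one (by positivity)]
      nlinarith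
    · rw [div_le_div_iff₀ (by positivity) hσ]
      nlinarith

lemma traj_bound {E : Type*} [NormedAddCommGroup E] [NormedSpace ℝ E]
    (x : ℝ → E) (hx : Differentiable ℝ x) (a b : ℝ) (hab : a ≤ b)
    (M : ℝ) (hM : 0 < M) (hMb : M * (b - a) ≤ 1/2)
    (hK : ∀ s ∈ Icc a b, ‖x s - x b‖ ≤ 3/4 → ‖deriv x s‖ ≤ M) :
    ∀ s ∈ Icc a b, ‖x s - x b‖ ≤ M * (b - s) := by
  set S : Set ℝ := {s | s ∈ Icc a b ∧ ∀ u ∈ Icc s b, ‖x u - x b‖ ≤ 3/4} with hS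
  have hbS : b ∈ S := by
    refine ⟨⟨hab, le_refl b⟩, fun u hu => ?_⟩
    have : u = b := le_antisymm hu.2 hu.1
    simp [this]
    norm_num
  have hSne : S.Nonempty := ⟨b, hbS⟩
  have hbdd : BddBelow S := ⟨a, fun s hs => hs.1.1⟩
  set c := sInf S with hc
  have hcb : c ≤ b := csInf_le hbdd hbS
  have hca : a ≤ c := le_csInf hSne (fun s hs => hs.1.1)
  have hup : ∀ s, c < s → s ≤ b → s ∈ S := by
    intro s hcs hsb
    obtain ⟨s₀, hs₀S, hs₀⟩ := exists_lt_of_csInf_lt hSne hcs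
    exact ⟨⟨hs₀S.1.1.trans hs₀.le, hsb⟩,
      fun u hu => hs₀S.2 u ⟨hs₀.le.trans hu.1, hu.2⟩⟩
  have hcS : c ∈ S := by
    refine ⟨⟨hca, hcb⟩, ?_⟩
    intro u hu
    rcases eq_or_lt_of_le hu.1 with h | h
    · rcases eq_or_lt_of_le hcb with hb' | hb'
      · rw [← h, hb']; simp; norm_num
      · have key : ∀ s ∈ Ioc c b, ‖x s - x b‖ ≤ 3/4 := fun s hs =>
          (hup s hs.1 hs.2).2 s ⟨le_refl s, hs.2⟩
        have hcont : ContinuousWithinAt (fun s => ‖x s - x b‖) (Ioc c b) c :=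
          ((hx.continuous.sub continuous_const).norm).continuousWithinAt
        have hne : (nhdsWithin c (Ioc c b)).NeBot := by
          rw [nhdsWithin_Ioc_eq_nhdsGT hb']
          exact nhdsGT_neBot c
        have := le_of_tendsto hcont
          (Filter.eventually_inf_principal.mpr (Filter.Eventually.of_forall key))
        rw [← h]
        simpa using this
    · exact (hup u h hu.2).2 u ⟨le_refl u, hu.2⟩
  have hderiv : ∀ u ∈ Icc c b, ‖deriv x u‖ ≤ M := fun u hu =>
    hK u ⟨hca.trans hu.1, hu.2⟩ (hcS.2 u hu)
  have hmvt : ∀ u ∈ Icc c b, ‖x u - x b‖ ≤ M * (b - u) := by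
    intro u hu
    have h1 : ∀ t ∈ Icc u b, HasDerivWithinAt x (deriv x t) (Icc u b) t :=
      fun t _ => (hx t).hasDerivAt.hasDerivWithinAt
    have h2 : ∀ t ∈ Ico u b, ‖deriv x t‖ ≤ M :=
      fun t ht => hderiv t ⟨hu.1.trans ht.1, ht.2.le⟩
    have := norm_image_sub_le_of_norm_deriv_le_segment' h1 h2 b ⟨hu.2, le_refl b⟩
    rw [norm_sub_rev]
    linarith [this]
  have hceq : c = a := by
    by_contra h
    have hac : a < c := lt_of_le_of_ne hca (Ne.symm h)
    have hxc : ‖x c - x b‖ ≤ 1/2 := by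
      have := hmvt c ⟨le_refl c, hcb⟩
      have h2 : M * (b - c) ≤ M * (b - a) := by nlinarith
      linarith
    have hev : ∀ᶠ s in nhds c, ‖x s - x b‖ < 3/4 := by
      have hcont : ContinuousAt (fun s => ‖x s - x b‖) c :=
        ((hx.continuous.sub continuous_const).norm).continuousAt
      exact hcont.eventually_lt_const (by linarith)
    rw [Metric.eventually_nhds_iff] at hev
    obtain ⟨η, hη, hball⟩ := hev
    set s₁ := max a (c - η/2) with hs₁
    have hs₁c : s₁ < c := by
      apply max_lt hac
      linarith
    have hs₁S : s₁ ∈ S := by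
      refine ⟨⟨le_max_left _ _, (hs₁c.le.trans hcb)⟩, ?_⟩
      intro u hu
      rcases le_or_gt c u with h' | h'
      · exact hcS.2 u ⟨h', hu.2⟩
      · have : dist u c < η := by
          rw [Real.dist_eq, abs_lt]
          constructor
          · linarith [hu.1, le_max_right a (c - η/2)]
          · linarith
        exact (hball this).le
    have := csInf_le hbdd hs₁S
    rw [← hc] at this
    linarith
  intro s hs
  exact hmvt s ⟨hceq ▸ hs.1, hs.2⟩

set_option maxHeartbeats 1000000 in
/-- Uniform version over a compact set: the size of the reachable neighborhood can be
bounded from below uniformly. -/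
theorem uniform_neighborhood_reachable {n : ℕ}
    (f : EuclideanSpace ℝ (Fin n) → EuclideanSpace ℝ (Fin n)) (hf : ContDiff ℝ (⊤ : ℕ∞) f)
    (Ω : Set (EuclideanSpace ℝ (Fin n))) (hΩ : IsCompact Ω) :
    ∀ ε > (0 : ℝ), ∀ Δ > (0 : ℝ), ∃ δ > (0 : ℝ),
      ∀ p ∈ Ω, ∀ p' ∈ Ω, p' ∈ closure (reach f (ε / 2) {Δ} {p}) →
        ∀ q : EuclideanSpace ℝ (Fin n), dist q p' < δ → q ∈ reach f ε {Δ} {p} := by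
  intro ε hε Δ hΔ
  obtain ⟨r, hr⟩ := hΩ.isBounded.subset_closedBall 0
  obtain ⟨R, hRnn, hrR⟩ : ∃ R, 0 ≤ R ∧ Ω ⊆ Metric.closedBall 0 R :=
    ⟨max r 0, le_max_right _ _,
      hr.trans (Metric.closedBall_subset_closedBall (le_max_left _ _))⟩
  obtain ⟨K, hKeq⟩ : ∃ K : Set (EuclideanSpace ℝ (Fin n)),
      K = Metric.closedBall 0 (R + 2) := ⟨_, rfl⟩
  have hKc : IsCompact K := by rw [hKeq]; exact isCompact_closedBall _ _
  obtain ⟨M₀, hM₀⟩ := hKc.exists_bound_of_continuousOn hf.continuous.continuousOn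
  obtain ⟨L₀, hL₀⟩ := hKc.exists_bound_of_continuousOn
    (hf.continuous_fderiv (by simp)).continuousOn
  obtain ⟨M, hMnn, hfM⟩ : ∃ M, 0 ≤ M ∧ ∀ z ∈ K, ‖f z‖ ≤ M :=
    ⟨max M₀ 0, le_max_right _ _, fun z hz => (hM₀ z hz).trans (le_max_left _ _)⟩
  obtain ⟨L, hLnn, hfL⟩ : ∃ L, 0 ≤ L ∧ ∀ z ∈ K, ‖fderiv ℝ f z‖ ≤ L :=
    ⟨max L₀ 0, le_max_right _ _, fun z hz => (hL₀ z hz).trans (le_max_left _ _)⟩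
  obtain ⟨M', hM'eq⟩ : ∃ m, m = M + ε := ⟨_, rfl⟩
  have hM' : 0 < M' := by rw [hM'eq]; linarith
  obtain ⟨σ, hσeq⟩ : ∃ s, s = min Δ (1/(2*M' + 2)) := ⟨_, rfl⟩
  have hσ : 0 < σ := by
    rw [hσeq]
    exact lt_min hΔ (by positivity)
  have hσΔ : σ ≤ Δ := by rw [hσeq]; exact min_le_left _ _
  have hσM : M' * σ ≤ 1/2 := by
    have h1 : M' * σ ≤ M' * (1/(2*M' + 2)) := by
      apply mul_le_mul_of_nonneg_left _ hM'.le
      rw [hσeq]; exact min_le_right _ _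
    have h2 : M' * (1/(2*M' + 2)) ≤ 1/2 := by
      rw [mul_one_div, div_le_iff₀ (by linarith)]
      linarith
    linarith
  obtain ⟨D, hDeq⟩ : ∃ d, d = 2/σ + L := ⟨_, rfl⟩
  have hD : 0 < D := by
    rw [hDeq]
    have : 0 < 2/σ := by positivity
    linarith
  obtain ⟨δ, hδeq⟩ : ∃ d, d = min (1/8) (ε / (8 * (D + 1))) := ⟨_, rfl⟩
  have hδpos : 0 < δ := by
    rw [hδeq]
    refine lt_min (by norm_num) (div_pos hε (by linarith))
  have hδ8 : δ ≤ 1/8 := by rw [hδeq]; exact min_le_left _ _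
  have hδD : D * (2*δ) ≤ ε/4 := by
    have h1 : δ ≤ ε / (8 * (D + 1)) := by rw [hδeq]; exact min_le_right _ _
    have h2 : δ * (8 * (D + 1)) ≤ ε := by
      rw [← le_div_iff₀ (by linarith)]
      exact h1
    nlinarith [hδpos, hD]
  refine ⟨δ, hδpos, ?_⟩
  intro p hp p' hp' hcl q hq
  obtain ⟨y, hyr, hdy⟩ := Metric.mem_closure_iff.mp hcl δ hδpos
  obtain ⟨t, ht, x, hxd, hx0, hxt, hslk⟩ := hyr
  rw [mem_singleton_iff] at ht
  subst ht
  rw [mem_singleton_iff] at hx0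
  -- basic norm facts
  have hp'R : ‖p'‖ ≤ R := by
    have := hrR hp'
    rwa [Metric.mem_closedBall, dist_zero_right] at this
  have hyp' : ‖y - p'‖ < δ := by
    rw [dist_eq_norm] at hdy
    rw [norm_sub_rev]
    exact hdy
  have hyR : ‖y‖ ≤ R + 1/8 := by
    have := norm_sub_norm_le y p'
    linarith
  have hqy : ‖q - y‖ ≤ 2*δ := by
    have h1 : q - y = (q - p') + (p' - y) := by abel
    rw [dist_eq_norm] at hq
    have h2 : ‖p' - y‖ < δ := by rw [norm_sub_rev]; exact hyp'
    calc ‖q - y‖ ≤ ‖q - p'‖ + ‖p' - y‖ := by rw [h1]; exact norm_add_le _ _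
    _ ≤ 2*δ := by linarith
  obtain ⟨a, ha⟩ : ∃ a, a = t - σ := ⟨_, rfl⟩
  have ha0 : 0 ≤ a := by rw [ha]; linarith
  have hat : a + σ = t := by rw [ha]; ring
  -- trajectory stays near y on [a, t]
  have htraj : ∀ s ∈ Icc a t, ‖x s - x t‖ ≤ M' * (t - s) := by
    apply traj_bound x hxd a t (by linarith) M' hM'
    · have hta : t - a = σ := by rw [ha]; ring
      rw [hta]; exact hσM
    · intro s hs hnear
      have hxsK : x s ∈ K := by
        rw [hKeq, Metric.mem_closedBall, dist_zero_right]
        rw [hxt] at hnear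
        have h := norm_sub_norm_le (x s) y
        linarith
      have hsl := hslk s ⟨by linarith [hs.1], hs.2⟩
      have hfx := hfM _ hxsK
      have h := norm_le_norm_add_norm_sub' (deriv x s) (f (x s))
      rw [hM'eq]
      linarith
  have htraj' : ∀ s ∈ Icc a t, ‖x s - y‖ ≤ 1/2 := by
    intro s hs
    have h1 := htraj s hs
    rw [hxt] at h1
    have h2 : M' * (t - s) ≤ M' * σ := by
      apply mul_le_mul_of_nonneg_left _ hM'.le
      have h3 := hs.1
      rw [ha] at h3
      linarith
    linarith
  -- the ramp function
  obtain ⟨lam, lam', hlamd, hlam_zero, hlam_one, hlam_bounds⟩ := exists_ramp a σ hσ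
  rw [hat] at hlam_one
  obtain ⟨v, hv⟩ : ∃ v, v = q - y := ⟨_, rfl⟩
  rw [← hv] at hqy
  refine ⟨t, mem_singleton t, fun s => x s + lam s • v, ?_, ?_, ?_, ?_⟩
  · exact hxd.add (fun s => ((hlamd s).differentiableAt.smul_const v))
  · show x 0 + lam 0 • v ∈ ({p} : Set (EuclideanSpace ℝ (Fin n)))
    rw [(hlam_zero 0 ha0).1, zero_smul, add_zero, hx0]
    exact mem_singleton p
  · show x t + lam t • v = q
    rw [hlam_one, one_smul, hxt, hv]
    abel
  · intro s hs
    have hder : deriv (fun s => x s + lam s • v) s = deriv x s + lam' s • v :=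
      ((hxd s).hasDerivAt.add ((hlamd s).smul_const v)).deriv
    show ‖deriv (fun s => x s + lam s • v) s - f (x s + lam s • v)‖ ≤ ε
    rw [hder]
    rcases le_or_gt s a with hsa | hsa
    · obtain ⟨hl0, hl'0⟩ := hlam_zero s hsa
      simp only [hl0, hl'0, zero_smul, add_zero]
      have := hslk s hs
      linarith
    · have hsat : s ≤ a + σ := by rw [hat]; exact hs.2
      obtain ⟨hl0, hl1, hl'0, hl'2⟩ := hlam_bounds s hsa.le hsat
      have hsIcc : s ∈ Icc a t := ⟨hsa.le, hs.2⟩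
      have hxsy := htraj' s hsIcc
      have hxsK : x s ∈ K := by
        rw [hKeq, Metric.mem_closedBall, dist_zero_right]
        have := norm_sub_norm_le (x s) y
        linarith
      have hnsv : ‖lam s • v‖ = lam s * ‖v‖ := by
        rw [norm_smul, Real.norm_eq_abs, abs_of_nonneg hl0]
      have hlv : ‖lam s • v‖ ≤ 2*δ := by
        rw [hnsv]
        nlinarith [norm_nonneg v, hqy, hδpos]
      have hxtK : x s + lam s • v ∈ K := by
        rw [hKeq, Metric.mem_closedBall, dist_zero_right]
        have h1 : ‖x s + lam s • v‖ ≤ ‖x s‖ + ‖lam s • v‖ := norm_add_le _ _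
        have h4 : ‖x s‖ ≤ R + 1/8 + 1/2 := by
          have := norm_sub_norm_le (x s) y
          linarith
        linarith
      -- Lipschitz estimate
      have hlip : ‖f (x s) - f (x s + lam s • v)‖ ≤ L * (2*δ) := by
        have hdiff : ∀ z ∈ K, DifferentiableAt ℝ f z := fun z _ => hf.differentiable (by simp) z
        have hconv : Convex ℝ K := by rw [hKeq]; exact convex_closedBall _ _
        have h1 := hconv.norm_image_sub_le_of_norm_fderiv_le hdiff hfL hxtK hxsK
        have h2 : x s - (x s + lam s • v) = -(lam s • v) := by abel
        rw [h2, norm_neg] at h1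
        nlinarith [hlv, hLnn, norm_nonneg (lam s • v)]
      have hA := hslk s hs
      have hsplit : deriv x s + lam' s • v - f (x s + lam s • v)
          = (deriv x s - f (x s)) + lam' s • v + (f (x s) - f (x s + lam s • v)) := by abel
      rw [hsplit]
      have hB : ‖lam' s • v‖ ≤ (2/σ) * (2*δ) := by
        rw [norm_smul, Real.norm_eq_abs, abs_of_nonneg hl'0]
        have h2σ : (0:ℝ) ≤ 2/σ := by positivity
        nlinarith [norm_nonneg v, hqy, hδpos]
      have h3 := norm_add_le ((deriv x s - f (x s)) + lam' s • v)
        (f (x s) - f (x s + lam s • v))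
      have h4 := norm_add_le (deriv x s - f (x s)) (lam' s • v)
      have h5 : (2/σ)*(2*δ) + L*(2*δ) = D*(2*δ) := by rw [hDeq]; ring
      linarith [hA, hB, hlip, hδD]
end
end

section
/- Let f : ℝⁿ → ℝⁿ be smooth with a complete flow φ, let μ > 0, and let V ⊆ ℝⁿ be a μ-robust safety certificate of a safety verification problem (f, I, U). Let B denote the topological boundary of the closure of V. Then for every x ∈ R_f^ℝ(B) there is exactly one t ∈ ℝ such that φ(x, t) ∈ B. -/
open Set
open scoped RealInnerProductSpace

noncomputable section

/-- `flowReach φ T X` is the set of points of the form `φ x t` with `x ∈ X`, `t ∈ T`. -/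
def flowReach {n : ℕ} (φ : EuclideanSpace ℝ (Fin n) → ℝ → EuclideanSpace ℝ (Fin n))
    (T : Set ℝ) (X : Set (EuclideanSpace ℝ (Fin n))) : Set (EuclideanSpace ℝ (Fin n)) :=
  {y | ∃ x ∈ X, ∃ t ∈ T, φ x t = y}

/-- Auxiliary: from any point of `closure V`, the flow is in `interior V` at any
positive time, when `V` is `μ`-robustly invariant with `μ > 0`. -/
lemma flow_enters_interior {n : ℕ}
    (f : EuclideanSpace ℝ (Fin n) → EuclideanSpace ℝ (Fin n)) (hf : ContDiff ℝ (⊤ : ℕ∞) f)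
    (φ : EuclideanSpace ℝ (Fin n) → ℝ → EuclideanSpace ℝ (Fin n))
    (hφd : ∀ x t, HasDerivAt (φ x) (f (φ x t)) t)
    (hφ0 : ∀ x, φ x 0 = x)
    (V : Set (EuclideanSpace ℝ (Fin n))) (μ : ℝ) (hμ : 0 < μ)
    (hInv : reach f μ (Set.Ici 0) V ⊆ V)
    (y : EuclideanSpace ℝ (Fin n)) (hy : y ∈ closure V) (t : ℝ) (ht : 0 < t) :
    φ y t ∈ interior V := by
  set γ : ℝ → EuclideanSpace ℝ (Fin n) := φ y with hγdef
  have hγd : ∀ s, HasDerivAt γ (f (γ s)) s := hφd y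
  have hγdiff : Differentiable ℝ γ := fun s => (hγd s).differentiableAt
  have hγc : Continuous γ := hγdiff.continuous
  -- compact tube around the trajectory
  set K : Set (EuclideanSpace ℝ (Fin n)) := γ '' Set.Icc 0 t with hKdef
  have hK : IsCompact K := isCompact_Icc.image hγc
  set K' : Set (EuclideanSpace ℝ (Fin n)) := Metric.cthickening 1 K with hK'def
  have hK' : IsCompact K' := hK.cthickening
  have hUC : UniformContinuousOn f K' :=
    hK'.uniformContinuousOn_of_continuous hf.continuous.continuousOn
  obtain ⟨δ, hδ, hδf⟩ := (Metric.uniformContinuousOn_iff.mp hUC) (μ / 2) (by positivity)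
  -- radius
  set ρ : ℝ := min (min (δ / 3) (1 / 3)) (μ * t / 4) with hρdef
  have hρ : 0 < ρ := by
    apply lt_min (lt_min (by positivity) (by norm_num))
    positivity
  have hρδ : 3 * ρ ≤ δ := by
    have := min_le_left (min (δ / 3) (1 / 3)) (μ * t / 4)
    have := le_trans this (min_le_left _ _)
    linarith
  have hρ1 : 3 * ρ ≤ 1 := by
    have := le_trans (min_le_left (min (δ / 3) (1 / 3)) (μ * t / 4)) (min_le_right _ _)
    linarith
  have hρμ : 2 * ρ / t ≤ μ / 2 := by
    have h1 : ρ ≤ μ * t / 4 := min_le_right _ _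
    rw [div_le_iff₀ ht] at *
    nlinarith
  -- the ball of radius ρ around γ t lies in V
  have hball : Metric.ball (γ t) ρ ⊆ V := by
    intro z hz
    rw [Metric.mem_ball, dist_eq_norm] at hz
    obtain ⟨y', hy'V, hy'⟩ := Metric.mem_closure_iff.mp hy ρ hρ
    rw [dist_comm, dist_eq_norm] at hy'
    set c₀ : EuclideanSpace ℝ (Fin n) := y' - y with hc₀def
    set c₁ : EuclideanSpace ℝ (Fin n) := t⁻¹ • (z - γ t - c₀) with hc₁def
    set x : ℝ → EuclideanSpace ℝ (Fin n) := fun s => γ s + (c₀ + s • c₁) with hxdef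
    have hc₀ : ‖c₀‖ < ρ := hy'
    have hc₁ : ‖c₁‖ < 2 * ρ / t := by
      have hn : ‖z - γ t - c₀‖ < 2 * ρ := by
        calc ‖z - γ t - c₀‖ ≤ ‖z - γ t‖ + ‖c₀‖ := norm_sub_le _ _
          _ < 2 * ρ := by linarith
      rw [hc₁def, norm_smul, Real.norm_eq_abs, abs_of_pos (inv_pos.mpr ht)]
      rw [div_eq_inv_mul]
      exact mul_lt_mul_of_pos_left hn (inv_pos.mpr ht)
    have hxder : ∀ s, HasDerivAt x (f (γ s) + c₁) s := by
      intro s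
      have h1 : HasDerivAt (fun s : ℝ => s • c₁) ((1 : ℝ) • c₁) s :=
        (hasDerivAt_id s).smul_const c₁
      rw [one_smul] at h1
      have h2 := (hasDerivAt_const s c₀).add h1
      rw [zero_add] at h2
      exact (hγd s).add h2
    have hxdiff : Differentiable ℝ x := fun s => (hxder s).differentiableAt
    have hx0 : x 0 = y' := by
      simp only [hxdef, zero_smul, add_zero]
      rw [hγdef, hφ0, hc₀def]
      abel
    have hxt : x t = z := by
      simp only [hxdef, hc₁def, smul_smul, mul_inv_cancel₀ (ne_of_gt ht), one_smul]
      abel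
    have hxsn : ∀ s ∈ Set.Icc (0 : ℝ) t, ‖x s - γ s‖ < 3 * ρ := by
      intro s hs
      have : x s - γ s = c₀ + s • c₁ := by simp only [hxdef]; abel
      rw [this]
      calc ‖c₀ + s • c₁‖ ≤ ‖c₀‖ + ‖s • c₁‖ := norm_add_le _ _
        _ = ‖c₀‖ + |s| * ‖c₁‖ := by rw [norm_smul, Real.norm_eq_abs]
        _ ≤ ‖c₀‖ + t * ‖c₁‖ := by
            have habs : |s| ≤ t := by
              rw [abs_of_nonneg hs.1]; exact hs.2
            have := mul_le_mul_of_nonneg_right habs (norm_nonneg c₁)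
            linarith
        _ < ρ + t * (2 * ρ / t) := by
            have := mul_lt_mul_of_pos_left hc₁ ht
            linarith
        _ = 3 * ρ := by field_simp; ring
    apply hInv
    refine ⟨t, le_of_lt ht, x, hxdiff, hx0 ▸ hy'V, hxt, ?_⟩
    intro s hs
    have hxsK' : x s ∈ K' := by
      refine Metric.mem_cthickening_of_dist_le (x s) (γ s) 1 K ⟨s, hs, rfl⟩ ?_
      rw [dist_eq_norm]
      have := hxsn s hs
      linarith
    have hγsK' : γ s ∈ K' :=
      Metric.self_subset_cthickening K ⟨s, hs, rfl⟩
    have hdist : dist (x s) (γ s) < δ := by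
      rw [dist_eq_norm]
      exact lt_of_lt_of_le (hxsn s hs) hρδ
    have hfd := hδf (x s) hxsK' (γ s) hγsK' hdist
    rw [dist_eq_norm] at hfd
    have hderiv : deriv x s = f (γ s) + c₁ := (hxder s).deriv
    rw [hderiv]
    calc ‖f (γ s) + c₁ - f (x s)‖ ≤ ‖f (γ s) - f (x s)‖ + ‖c₁‖ := by
          have : f (γ s) + c₁ - f (x s) = (f (γ s) - f (x s)) + c₁ := by abel
          rw [this]; exact norm_add_le _ _
      _ ≤ μ / 2 + μ / 2 := by
          rw [norm_sub_rev]
          have : ‖c₁‖ ≤ μ / 2 := le_trans (le_of_lt hc₁) hρμ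
          linarith
      _ = μ := by ring
  exact mem_interior.mpr ⟨Metric.ball (γ t) ρ, hball, Metric.isOpen_ball,
    Metric.mem_ball_self hρ⟩

/-- Solutions starting on the boundary of the closure of a robust safety certificate
cross that boundary exactly once (even in reverse time). -/
theorem unique_boundary_crossing {n : ℕ}
    (f : EuclideanSpace ℝ (Fin n) → EuclideanSpace ℝ (Fin n)) (hf : ContDiff ℝ (⊤ : ℕ∞) f)
    (φ : EuclideanSpace ℝ (Fin n) → ℝ → EuclideanSpace ℝ (Fin n))
    (hφ0 : ∀ x, φ x 0 = x)
    (hφd : ∀ x t, HasDerivAt (φ x) (f (φ x t)) t)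
    (hφa : ∀ x s t, φ (φ x s) t = φ x (s + t))
    (I U V : Set (EuclideanSpace ℝ (Fin n))) (μ : ℝ) (hμ : 0 < μ)
    (hIV : I ⊆ V) (hInv : reach f μ (Set.Ici 0) V ⊆ V) (hVU : V ∩ U = ∅) :
    ∀ x ∈ flowReach φ Set.univ (frontier (closure V)),
      ∃! t : ℝ, φ x t ∈ frontier (closure V) := by
  -- key: once on the closure, the flow is in the interior at any later time
  have key : ∀ x : EuclideanSpace ℝ (Fin n), ∀ a b : ℝ, a < b →
      φ x a ∈ frontier (closure V) → φ x b ∉ frontier (closure V) := by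
    intro x a b hab ha hb
    have hca : φ x a ∈ closure V := by
      have := ha.1
      rwa [closure_closure] at this
    have hint : φ (φ x a) (b - a) ∈ interior V :=
      flow_enters_interior f hf φ hφd hφ0 V μ hμ hInv (φ x a) hca (b - a)
        (by linarith)
    rw [hφa, add_sub_cancel] at hint
    have hint' : φ x b ∈ interior (closure V) :=
      interior_mono subset_closure hint
    exact hb.2 hint'
  rintro x ⟨x₀, hx₀, s, -, rfl⟩
  refine ⟨-s, ?_, ?_⟩
  · show φ (φ x₀ s) (-s) ∈ frontier (closure V)
    rw [hφa, add_neg_cancel, hφ0]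
    exact hx₀
  · intro t' ht'
    by_contra hne
    have hmem : φ (φ x₀ s) (-s) ∈ frontier (closure V) := by
      rw [hφa, add_neg_cancel, hφ0]; exact hx₀
    rcases lt_or_gt_of_ne hne with h | h
    · exact key (φ x₀ s) t' (-s) h ht' hmem
    · exact key (φ x₀ s) (-s) t' h hmem ht'
end
end

section
/- Let f : ℝⁿ → ℝⁿ be smooth with a complete flow φ, let μ > 0, and let V ⊆ ℝⁿ be a μ-robust safety certificate of a safety verification problem (f, I, U). Let B denote the topological boundary of the closure of V. Then for all x ∈ ℝⁿ and all s, t, t' ∈ ℝ: if φ(x, t) ∈ B and φ(φ(x, s), t') ∈ B, then t' = t − s. (Equivalently, the function ν assigning to x the negative of the unique crossing time satisfies ν(φ(x, s)) = ν(x) + s.) -/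
open Set
open scoped RealInnerProductSpace

noncomputable section

theorem flow_mem_interior {n : ℕ}
    (f : EuclideanSpace ℝ (Fin n) → EuclideanSpace ℝ (Fin n)) (hf : ContDiff ℝ (⊤ : ℕ∞) f)
    (φ : EuclideanSpace ℝ (Fin n) → ℝ → EuclideanSpace ℝ (Fin n))
    (hφ0 : ∀ x, φ x 0 = x)
    (hφd : ∀ x t, HasDerivAt (φ x) (f (φ x t)) t)
    (V : Set (EuclideanSpace ℝ (Fin n))) (μ : ℝ) (hμ : 0 < μ)
    (hInv : reach f μ (Set.Ici 0) V ⊆ V)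
    (y : EuclideanSpace ℝ (Fin n)) (hy : y ∈ closure V) (t : ℝ) (ht : 0 < t) :
    φ y t ∈ interior V := by
  have hfd : Differentiable ℝ f := hf.differentiable (by simp)
  have hφdiff : Differentiable ℝ (φ y) := fun s => (hφd y s).differentiableAt
  have hφcont : Continuous (φ y) := hφdiff.continuous
  set Γ : Set (EuclideanSpace ℝ (Fin n)) := (φ y) '' Icc 0 t with hΓ
  have hΓc : IsCompact Γ := (isCompact_Icc).image hφcont
  set K : Set (EuclideanSpace ℝ (Fin n)) := Metric.cthickening 1 Γ with hKdef
  have hKc : IsCompact K := hΓc.cthickening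
  have hKne : K.Nonempty := ⟨φ y 0, Metric.self_subset_cthickening _ ⟨0, ⟨le_refl 0, ht.le⟩, rfl⟩⟩
  have hfC : Continuous fun x => ‖fderiv ℝ f x‖ := (hf.continuous_fderiv (by simp)).norm
  obtain ⟨x0, _, hx0⟩ := hKc.exists_isMaxOn hKne hfC.continuousOn
  set C : ℝ := ‖fderiv ℝ f x0‖ with hCdef
  have hC0 : 0 ≤ C := norm_nonneg _
  have hCK : ∀ x ∈ K, ‖fderiv ℝ f x‖ ≤ C := fun x hx => hx0 hx
  set ρ : ℝ := min 1 (μ * t / (C * t + 2)) with hρdef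
  have hden : 0 < C * t + 2 := by nlinarith
  have hρ : 0 < ρ := lt_min one_pos (by positivity)
  have hρ1 : ρ ≤ 1 := min_le_left _ _
  have hρ2 : ρ ≤ μ * t / (C * t + 2) := min_le_right _ _
  -- main claim: the ball of radius ρ around φ y t is contained in V
  have hball : Metric.ball (φ y t) ρ ⊆ V := by
    intro z hz
    set w : EuclideanSpace ℝ (Fin n) := φ y t with hw
    have hzw : ‖z - w‖ ≤ ρ := by
      rw [← dist_eq_norm]; exact (Metric.mem_ball.1 hz).le
    obtain ⟨v, hvV, hvy⟩ := Metric.mem_closure_iff.1 hy ρ hρ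
    have hvy' : ‖v - y‖ ≤ ρ := by
      rw [← dist_eq_norm, dist_comm]; exact hvy.le
    set c : ℝ → EuclideanSpace ℝ (Fin n) :=
      fun s => φ y s + ((t - s)/t) • (v - y) + (s/t) • (z - w) with hcdef
    have hc : ∀ s, HasDerivAt c
        (f (φ y s) + ((-1)/t) • (v - y) + (1/t) • (z - w)) s := by
      intro s
      have h1 : HasDerivAt (fun s : ℝ => (t - s)/t) ((-1)/t) s := by
        simpa using ((hasDerivAt_id s).const_sub t).div_const t
      have h2 : HasDerivAt (fun s : ℝ => s/t) (1/t) s := by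
        simpa using (hasDerivAt_id s).div_const t
      exact ((hφd y s).add (h1.smul_const (v - y))).add (h2.smul_const (z - w))
    have hcdiff : Differentiable ℝ c := fun s => (hc s).differentiableAt
    have hc0 : c 0 = v := by
      simp only [hcdef, hφ0, sub_zero, div_self ht.ne', one_smul, zero_div, zero_smul, add_zero]
      abel
    have hct : c t = z := by
      simp only [hcdef, sub_self, zero_div, zero_smul, add_zero, zero_add,
        div_self ht.ne', one_smul]
      abel
    refine hInv ⟨t, ht.le, c, hcdiff, hc0 ▸ hvV, hct, ?_⟩
    intro s hs
    obtain ⟨hs0, hst⟩ := hs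
    have hnn1 : 0 ≤ (t - s)/t := div_nonneg (by linarith) ht.le
    have hnn2 : 0 ≤ s/t := div_nonneg hs0 ht.le
    have hsum : (t - s)/t + s/t = 1 := by field_simp; ring
    have hdiff : ‖c s - φ y s‖ ≤ ρ := by
      have : c s - φ y s = ((t - s)/t) • (v - y) + (s/t) • (z - w) := by
        simp only [hcdef]; abel
      rw [this]
      calc ‖((t - s)/t) • (v - y) + (s/t) • (z - w)‖
          ≤ ((t - s)/t) * ‖v - y‖ + (s/t) * ‖z - w‖ := by
            refine (norm_add_le _ _).trans ?_
            rw [norm_smul, norm_smul, Real.norm_eq_abs, Real.norm_eq_abs,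
              abs_of_nonneg hnn1, abs_of_nonneg hnn2]
        _ ≤ ρ := by nlinarith [mul_le_mul_of_nonneg_left hvy' hnn1,
              mul_le_mul_of_nonneg_left hzw hnn2]
    have hφsΓ : φ y s ∈ Γ := ⟨s, ⟨hs0, hst⟩, rfl⟩
    have hcsK : c s ∈ Metric.closedBall (φ y s) 1 := by
      rw [Metric.mem_closedBall, dist_eq_norm]
      exact hdiff.trans hρ1
    have hsub : Metric.closedBall (φ y s) 1 ⊆ K :=
      Metric.closedBall_subset_cthickening hφsΓ 1
    have hfdiffest : ‖f (c s) - f (φ y s)‖ ≤ C * ‖c s - φ y s‖ := by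
      refine (convex_closedBall (φ y s) 1).norm_image_sub_le_of_norm_fderiv_le
        (fun x _ => hfd x) (fun x hx => hCK x (hsub hx)) ?_ hcsK
      exact Metric.mem_closedBall_self one_pos.le
    have hderiv : deriv c s = f (φ y s) + ((-1)/t) • (v - y) + (1/t) • (z - w) :=
      (hc s).deriv
    have hrw : deriv c s - f (c s)
        = (f (φ y s) - f (c s)) + (((-1)/t) • (v - y) + (1/t) • (z - w)) := by
      rw [hderiv]; abel
    rw [hrw]
    have hnorm2 : ‖((-1)/t) • (v - y) + (1/t) • (z - w)‖ ≤ ρ/t + ρ/t := by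
      refine (norm_add_le _ _).trans ?_
      rw [norm_smul, norm_smul, Real.norm_eq_abs, Real.norm_eq_abs]
      have h1 : |(-1)/t| = 1/t := by rw [abs_div, abs_neg, abs_one, abs_of_pos ht]
      have h2 : |1/t| = 1/t := by rw [abs_div, abs_one, abs_of_pos ht]
      rw [h1, h2, one_div_mul_eq_div, one_div_mul_eq_div]
      gcongr
    have hkey : ρ * (C * t + 2) ≤ μ * t := (le_div_iff₀ hden).1 hρ2
    have hq : ρ / t * t = ρ := div_mul_cancel₀ ρ ht.ne'
    calc ‖(f (φ y s) - f (c s)) + (((-1)/t) • (v - y) + (1/t) • (z - w))‖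
        ≤ ‖f (φ y s) - f (c s)‖ + ‖((-1)/t) • (v - y) + (1/t) • (z - w)‖ :=
          norm_add_le _ _
      _ ≤ C * ‖c s - φ y s‖ + (ρ/t + ρ/t) := by
          rw [norm_sub_rev]
          exact add_le_add hfdiffest hnorm2
      _ ≤ C * ρ + (ρ/t + ρ/t) := by
          have := mul_le_mul_of_nonneg_left hdiff hC0
          linarith
      _ ≤ μ := by nlinarith [hkey, hq, ht, div_nonneg hρ.le ht.le]
  exact mem_interior_iff_mem_nhds.2 (Filter.mem_of_superset (Metric.ball_mem_nhds _ hρ) hball)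

/-- The crossing time of the boundary of the closure of a robust safety certificate
translates along the flow: if φ(x,t) and φ(φ(x,s),t') are both on the boundary, then
t' = t - s. -/
theorem crossing_time_cocycle {n : ℕ}
    (f : EuclideanSpace ℝ (Fin n) → EuclideanSpace ℝ (Fin n)) (hf : ContDiff ℝ (⊤ : ℕ∞) f)
    (φ : EuclideanSpace ℝ (Fin n) → ℝ → EuclideanSpace ℝ (Fin n))
    (hφ0 : ∀ x, φ x 0 = x)
    (hφd : ∀ x t, HasDerivAt (φ x) (f (φ x t)) t)
    (hφa : ∀ x s t, φ (φ x s) t = φ x (s + t))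
    (I U V : Set (EuclideanSpace ℝ (Fin n))) (μ : ℝ) (hμ : 0 < μ)
    (hIV : I ⊆ V) (hInv : reach f μ (Set.Ici 0) V ⊆ V) (hVU : V ∩ U = ∅) :
    ∀ (x : EuclideanSpace ℝ (Fin n)) (s t t' : ℝ),
      φ x t ∈ frontier (closure V) → φ (φ x s) t' ∈ frontier (closure V) →
      t' = t - s := by
  intro x s t t' h1 h2
  rw [hφa] at h2
  -- key: no two distinct boundary crossing times
  have key : ∀ a b : ℝ, a < b → φ x a ∈ frontier (closure V) →
      φ x b ∈ frontier (closure V) → False := by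
    intro a b hab ha hb
    have haV : φ x a ∈ closure V := by
      have := frontier_subset_closure ha
      rwa [closure_closure] at this
    have hbint : φ x b ∈ interior V := by
      have := flow_mem_interior f hf φ hφ0 hφd V μ hμ hInv (φ x a) haV (b - a)
        (by linarith)
      rwa [hφa, add_sub_cancel] at this
    exact hb.2 (interior_mono subset_closure hbint)
  rcases lt_trichotomy (s + t') t with h | h | h
  · exact absurd (key _ _ h h2 h1) not_false
  · linarith
  · exact absurd (key _ _ h h1 h2) not_false
end
end

section
/- Let f : ℝⁿ → ℝⁿ be smooth with a complete flow φ, let μ > 0, and let V ⊆ ℝⁿ be a μ-robust safety certificate of a safety verification problem (f, I, U). Let B denote the topological boundary of the closure of V. Then: (a) if x belongs to the interior of V and φ(x, t) ∈ B, then t < 0; and (b) if x does not belong to the closure of V and φ(x, t) ∈ B, then t > 0. (Thus the function ν(x) := −t, where t is the unique crossing time, is positive on interior points and negative on points outside the closure of V.) -/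
open Set
open scoped RealInnerProductSpace

noncomputable section

lemma key_interior {n : ℕ} (f : EuclideanSpace ℝ (Fin n) → EuclideanSpace ℝ (Fin n))
    (hf : Continuous f)
    (φ : EuclideanSpace ℝ (Fin n) → ℝ → EuclideanSpace ℝ (Fin n))
    (hφ0 : ∀ x, φ x 0 = x)
    (hφd : ∀ x t, HasDerivAt (φ x) (f (φ x t)) t)
    (V : Set (EuclideanSpace ℝ (Fin n))) (μ : ℝ) (hμ : 0 < μ)
    (hInv : reach f μ (Set.Ici 0) V ⊆ V) :
    ∀ y ∈ closure V, ∀ t : ℝ, 0 < t → φ y t ∈ interior V := by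
  intro y hy t ht
  have ht0 : t ≠ 0 := ne_of_gt ht
  have hφyc : Continuous (φ y) :=
    continuous_iff_continuousAt.mpr fun s => (hφd y s).continuousAt
  set K : Set (EuclideanSpace ℝ (Fin n)) := φ y '' Set.Icc 0 t with hK
  have hKc : IsCompact K := isCompact_Icc.image hφyc
  have hK'c : IsCompact (Metric.cthickening 1 K) := hKc.cthickening
  have hfu := hK'c.uniformContinuousOn_of_continuous hf.continuousOn
  rw [Metric.uniformContinuousOn_iff] at hfu
  obtain ⟨δ₀, hδ₀, hδ⟩ := hfu (μ/2) (by linarith)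
  set δ := min δ₀ 1 with hδdef
  have hδpos : 0 < δ := lt_min hδ₀ one_pos
  obtain ⟨z, hzV, hz⟩ := Metric.mem_closure_iff.mp hy (min (δ/2) (t*μ/4)) (by positivity)
  have hz1 : dist y z < δ/2 := lt_of_lt_of_le hz (min_le_left _ _)
  have hz2 : dist y z < t*μ/4 := lt_of_lt_of_le hz (min_le_right _ _)
  set r := min (δ/(2*t)) (μ/4) with hr
  have hrpos : 0 < r := lt_min (by positivity) (by positivity)
  have hball : Metric.ball (φ y t) (t*r) ⊆ V := by
    intro p hp
    rw [Metric.mem_ball, dist_eq_norm] at hp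
    set w := t⁻¹ • (p - φ y t) with hw
    have hwn : ‖w‖ < r := by
      rw [hw, norm_smul, norm_inv, Real.norm_eq_abs, abs_of_pos ht, inv_mul_lt_iff₀ ht]
      linarith
    have hwr1 : ‖w‖ < δ/(2*t) := lt_of_lt_of_le hwn (min_le_left _ _)
    have hwr2 : ‖w‖ < μ/4 := lt_of_lt_of_le hwn (min_le_right _ _)
    set c : ℝ → EuclideanSpace ℝ (Fin n) :=
      fun s => φ y s + ((t - s)/t) • (z - y) + s • w with hc
    have hder : ∀ s, HasDerivAt c
        (f (φ y s) + ((0-1)/t) • (z - y) + (1:ℝ) • w) s := by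
      intro s
      exact ((hφd y s).add
        ((((hasDerivAt_const s t).sub (hasDerivAt_id s)).div_const t).smul_const (z-y))).add
        ((hasDerivAt_id s).smul_const w)
    have hzy : ‖z - y‖ < t*μ/4 := by rwa [← dist_eq_norm, dist_comm]
    have hzy1 : ‖z - y‖ < δ/2 := by rw [← dist_eq_norm, dist_comm]; exact hz1
    apply hInv
    refine ⟨t, le_of_lt ht, c, fun s => (hder s).differentiableAt, ?_, ?_, ?_⟩
    · show φ y 0 + ((t - 0)/t) • (z - y) + (0:ℝ) • w ∈ V
      rw [hφ0, sub_zero, div_self ht0, one_smul, zero_smul, add_zero]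
      rwa [add_sub_cancel]
    · show φ y t + ((t - t)/t) • (z - y) + t • w = p
      rw [sub_self, zero_div, zero_smul, add_zero, hw, smul_inv_smul₀ ht0,
        add_sub_cancel]
    · intro s hs
      have hds : deriv c s = f (φ y s) + ((0-1)/t) • (z - y) + (1:ℝ) • w := (hder s).deriv
      have hsplit : deriv c s - f (c s)
          = (f (φ y s) - f (c s)) + (((0-1)/t) • (z - y) + (1:ℝ) • w) := by
        rw [hds]; abel
      have hdist : dist (c s) (φ y s) < δ := by
        rw [dist_eq_norm]
        have : c s - φ y s = ((t - s)/t) • (z - y) + s • w := by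
          simp only [hc]; abel
        rw [this]
        have h1 : ‖((t - s)/t) • (z - y)‖ ≤ ‖z - y‖ := by
          rw [norm_smul, Real.norm_eq_abs]
          have : |(t - s)/t| ≤ 1 := by
            rw [abs_div, abs_of_pos ht, div_le_one ht, abs_le]
            constructor <;> [linarith [hs.1, hs.2]; linarith [hs.1]]
          nlinarith [norm_nonneg (z - y)]
        have h2 : ‖s • w‖ ≤ t * ‖w‖ := by
          rw [norm_smul, Real.norm_eq_abs, abs_of_nonneg hs.1]
          exact mul_le_mul_of_nonneg_right hs.2 (norm_nonneg w)
        have h3 : t * ‖w‖ < δ/2 := by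
          have h := (mul_lt_mul_iff_right₀ ht).mpr hwr1
          have he : t * (δ/(2*t)) = δ/2 := by field_simp
          linarith
        calc ‖((t - s)/t) • (z - y) + s • w‖
            ≤ ‖((t - s)/t) • (z - y)‖ + ‖s • w‖ := norm_add_le _ _
          _ < δ := by linarith
      have hcs : c s ∈ Metric.cthickening 1 K := by
        apply Metric.mem_cthickening_of_dist_le (c s) (φ y s) 1 K
        · exact ⟨s, hs, rfl⟩
        · exact le_trans (le_of_lt hdist) (min_le_right _ _)
      have hps : φ y s ∈ Metric.cthickening 1 K :=
        Metric.self_subset_cthickening K ⟨s, hs, rfl⟩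
      have hfd : dist (f (φ y s)) (f (c s)) < μ/2 := by
        rw [dist_comm]
        exact hδ _ hcs _ hps (lt_of_lt_of_le hdist (min_le_left _ _))
      have hen : ‖((0-1)/t) • (z - y) + (1:ℝ) • w‖ ≤ μ/2 := by
        have h4 : ‖((0-1)/t) • (z - y)‖ < μ/4 := by
          rw [norm_smul, Real.norm_eq_abs, abs_div, abs_of_pos ht]
          rw [div_mul_eq_mul_div, div_lt_iff₀ ht]
          have : |(0:ℝ) - 1| = 1 := by norm_num
          rw [this, one_mul]
          calc ‖z - y‖ < t*μ/4 := hzy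
            _ = μ/4 * t := by ring
        have h5 : ‖(1:ℝ) • w‖ < μ/4 := by rwa [one_smul]
        calc ‖((0-1)/t) • (z - y) + (1:ℝ) • w‖
            ≤ ‖((0-1)/t) • (z - y)‖ + ‖(1:ℝ) • w‖ := norm_add_le _ _
          _ ≤ μ/2 := by linarith
      rw [hsplit]
      calc ‖(f (φ y s) - f (c s)) + (((0-1)/t) • (z - y) + (1:ℝ) • w)‖
          ≤ ‖f (φ y s) - f (c s)‖ + ‖((0-1)/t) • (z - y) + (1:ℝ) • w‖ := norm_add_le _ _
        _ ≤ μ := by rw [← dist_eq_norm] at *; linarith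
  exact mem_interior.mpr ⟨Metric.ball (φ y t) (t*r), hball, Metric.isOpen_ball,
    Metric.mem_ball_self (by positivity)⟩

/-- Sign of the crossing time: from the interior of V the boundary is reached only in
negative time, from outside the closure of V only in positive time. -/
theorem crossing_time_sign {n : ℕ}
    (f : EuclideanSpace ℝ (Fin n) → EuclideanSpace ℝ (Fin n)) (hf : ContDiff ℝ (⊤ : ℕ∞) f)
    (φ : EuclideanSpace ℝ (Fin n) → ℝ → EuclideanSpace ℝ (Fin n))
    (hφ0 : ∀ x, φ x 0 = x)
    (hφd : ∀ x t, HasDerivAt (φ x) (f (φ x t)) t)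
    (hφa : ∀ x s t, φ (φ x s) t = φ x (s + t))
    (I U V : Set (EuclideanSpace ℝ (Fin n))) (μ : ℝ) (hμ : 0 < μ)
    (hIV : I ⊆ V) (hInv : reach f μ (Set.Ici 0) V ⊆ V) (hVU : V ∩ U = ∅) :
    (∀ (x : EuclideanSpace ℝ (Fin n)) (t : ℝ),
      x ∈ interior V → φ x t ∈ frontier (closure V) → t < 0) ∧
    (∀ (x : EuclideanSpace ℝ (Fin n)) (t : ℝ),
      x ∉ closure V → φ x t ∈ frontier (closure V) → 0 < t) := by
  have key := key_interior f hf.continuous φ hφ0 hφd V μ hμ hInv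
  constructor
  · intro x t hx hft
    by_contra h
    push_neg at h
    rcases eq_or_lt_of_le h with heq | hlt
    · rw [← heq, hφ0] at hft
      exact hft.2 (interior_mono subset_closure hx)
    · have h2 := key x (subset_closure (interior_subset hx)) t hlt
      exact hft.2 (interior_mono subset_closure h2)
  · intro x t hx hft
    by_contra h
    push_neg at h
    have hmem : φ x t ∈ closure V := by
      have h1 := hft.1; rwa [closure_closure] at h1
    rcases eq_or_lt_of_le h with heq | hlt
    · rw [heq, hφ0] at hmem; exact hx hmem
    · have h2 := key (φ x t) hmem (-t) (by linarith)
      rw [hφa, add_neg_cancel, hφ0] at h2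
      exact hx (subset_closure (interior_subset h2))
end
end

section
/- Let f : ℝⁿ → ℝⁿ be smooth with a complete flow φ, let μ > 0, and let V ⊆ ℝⁿ be a bounded μ-robust safety certificate of a safety verification problem (f, I, U). Let B denote the topological boundary of the closure of V. Then there exist an open set N ⊆ ℝⁿ with B ⊆ N ⊆ R_f^ℝ(B) and a function ν : ℝⁿ → ℝ that is continuous on N and satisfies φ(x, −ν(x)) ∈ B for every x ∈ N. -/
open Set Metric
open scoped RealInnerProductSpace NNReal

noncomputable section

section Aux

variable {E : Type*} [NormedAddCommGroup E] [NormedSpace ℝ E]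

lemma escape_aux {c : ℝ → E} {F : ℝ → E} (hc : ∀ t, HasDerivAt c (F t) t)
    {M s : ℝ} (hM : 0 ≤ M) (hsM : M * s < 1)
    (hbound : ∀ t ∈ Icc 0 s, ‖c t - c 0‖ ≤ 1 → ‖F t‖ ≤ M) :
    ∀ t ∈ Icc 0 s, ‖c t - c 0‖ < 1 := by
  by_contra h
  push_neg at h
  obtain ⟨t₁, ht₁, hge⟩ := h
  have hcont : Continuous c := by
    rw [continuous_iff_continuousAt]; exact fun t => (hc t).differentiableAt.continuousAt
  have hgc : Continuous (fun t => ‖c t - c 0‖) := (hcont.sub continuous_const).norm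
  obtain ⟨t₀, ht₀⟩ : ∃ t₀, t₀ = sInf {t | t ∈ Icc 0 s ∧ 1 ≤ ‖c t - c 0‖} := ⟨_, rfl⟩
  set S := {t | t ∈ Icc 0 s ∧ 1 ≤ ‖c t - c 0‖} with hS
  have hSclosed : IsClosed S := (isClosed_Icc.inter (isClosed_le continuous_const hgc))
  have hSne : S.Nonempty := ⟨t₁, ht₁, hge⟩
  have hSbdd : BddBelow S := ⟨0, fun u hu => hu.1.1⟩
  have ht₀S : t₀ ∈ S := ht₀ ▸ hSclosed.csInf_mem hSne hSbdd
  have ht₀pos : 0 < t₀ := by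
    rcases lt_or_eq_of_le ht₀S.1.1 with h | h
    · exact h
    · exfalso; have h2 := ht₀S.2; rw [← h] at h2; simp at h2; linarith
  have hlt : ∀ u, 0 ≤ u → u < t₀ → ‖c u - c 0‖ < 1 := by
    intro u hu0 hut
    have huS : u ∉ S := fun huS => absurd (ht₀ ▸ csInf_le hSbdd huS) (not_le.2 hut)
    have hmem : u ∈ Icc 0 s := ⟨hu0, hut.le.trans ht₀S.1.2⟩
    by_contra hcon
    exact huS ⟨hmem, le_of_not_gt hcon⟩
  have hclo : ‖c t₀ - c 0‖ ≤ 1 := by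
    have h1 : Ico (0:ℝ) t₀ ⊆ {w | ‖c w - c 0‖ ≤ 1} := fun w hw => (hlt w hw.1 hw.2).le
    have h2 : t₀ ∈ closure (Ico (0:ℝ) t₀) := by
      rw [closure_Ico (ne_of_lt ht₀pos)]
      exact ⟨ht₀pos.le, le_refl _⟩
    have h3 := closure_mono h1 h2
    rwa [(isClosed_le hgc continuous_const).closure_eq] at h3
  have hle_t₀ : ∀ u ∈ Icc (0:ℝ) t₀, ‖c u - c 0‖ ≤ 1 := by
    intro u hu
    rcases lt_or_eq_of_le hu.2 with h | h
    · exact (hlt u hu.1 h).le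
    · rw [h]; exact hclo
  have hmvt := (convex_Icc (0:ℝ) t₀).norm_image_sub_le_of_norm_hasDerivWithin_le
    (f := c) (f' := F) (C := M)
    (fun u hu => (hc u).hasDerivWithinAt)
    (fun u hu => hbound u ⟨hu.1, hu.2.trans ht₀S.1.2⟩ (hle_t₀ u hu))
    ⟨le_refl 0, ht₀pos.le⟩ ⟨ht₀pos.le, le_refl t₀⟩
  have hb : ‖c t₀ - c 0‖ ≤ M * t₀ := by
    simpa [Real.norm_eq_abs, abs_of_nonneg ht₀pos.le] using hmvt
  have h4 : (1:ℝ) ≤ M * t₀ := le_trans ht₀S.2 hb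
  have h5 : M * t₀ ≤ M * s := mul_le_mul_of_nonneg_left ht₀S.1.2 hM
  linarith

lemma gronwall_aux {f : E → E} {φ : E → ℝ → E}
    (hφ0 : ∀ x, φ x 0 = x) (hφd : ∀ x t, HasDerivAt (φ x) (f (φ x t)) t)
    {L : ℝ≥0} {K : Set E} (hLip : LipschitzOnWith L f K)
    {τ : ℝ}
    {x y : E} (hx : ∀ u : ℝ, |u| ≤ τ → φ x u ∈ K) (hy : ∀ u : ℝ, |u| ≤ τ → φ y u ∈ K)
    {t : ℝ} (ht : |t| ≤ τ) :
    dist (φ x t) (φ y t) ≤ dist x y * Real.exp (L * τ) := by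
  have hcx : ∀ z : E, Continuous (φ z) := by
    intro z
    rw [continuous_iff_continuousAt]; exact fun u => (hφd z u).differentiableAt.continuousAt
  rcases le_or_gt 0 t with h0 | h0
  · have habs : ∀ u ∈ Ico (0:ℝ) t, |u| ≤ τ := by
      intro u hu
      rw [abs_of_nonneg hu.1]; exact le_trans hu.2.le (le_trans (le_abs_self t) ht)
    have key := dist_le_of_trajectories_ODE_of_mem (v := fun _ z => f z) (s := fun _ => K)
      (K := L) (fun _ _ => hLip)
      ((hcx x).continuousOn (s := Icc 0 t))
      (fun u _ => (hφd x u).hasDerivWithinAt)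
      (fun u hu => hx u (habs u hu))
      ((hcx y).continuousOn (s := Icc 0 t))
      (fun u _ => (hφd y u).hasDerivWithinAt)
      (fun u hu => hy u (habs u hu))
      (le_of_eq (by rw [hφ0, hφ0])) t ⟨h0, le_refl t⟩
    refine le_trans key (mul_le_mul_of_nonneg_left (Real.exp_le_exp.2 ?_) dist_nonneg)
    rw [sub_zero]
    exact mul_le_mul_of_nonneg_left (le_trans (le_abs_self t) ht) L.coe_nonneg
  · have hLipneg : LipschitzOnWith L (fun z => -f z) K := fun a ha b hb => by
      simpa [edist_neg_neg] using hLip ha hb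
    have hd : ∀ z : E, ∀ u : ℝ, HasDerivAt (fun u => φ z (-u)) (-f (φ z (-u))) u := by
      intro z u
      have h1 := (hφd z (-u)).scomp u (hasDerivAt_neg u)
      simpa [Function.comp_def] using h1
    have habs : ∀ u ∈ Ico (0:ℝ) (-t), |(-u)| ≤ τ := by
      intro u hu
      rw [abs_neg, abs_of_nonneg hu.1]
      exact le_trans hu.2.le (le_trans (neg_le_abs t) ht)
    have key := dist_le_of_trajectories_ODE_of_mem (v := fun _ z => -f z) (s := fun _ => K)
      (K := L) (fun _ _ => hLipneg)
      (((hcx x).comp continuous_neg).continuousOn (s := Icc 0 (-t)))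
      (fun u _ => (hd x u).hasDerivWithinAt)
      (fun u hu => hx (-u) (habs u hu))
      (((hcx y).comp continuous_neg).continuousOn (s := Icc 0 (-t)))
      (fun u _ => (hd y u).hasDerivWithinAt)
      (fun u hu => hy (-u) (habs u hu))
      (show dist ((φ x ∘ fun a => -a) 0) ((φ y ∘ fun a => -a) 0) ≤ dist x y by
        simp [Function.comp, hφ0]) (-t) ⟨neg_nonneg.2 h0.le, le_refl _⟩
    simp only [Function.comp_apply, neg_neg] at key
    refine le_trans key (mul_le_mul_of_nonneg_left (Real.exp_le_exp.2 ?_) dist_nonneg)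
    rw [sub_zero]
    exact mul_le_mul_of_nonneg_left (le_trans (neg_le_abs t) ht) L.coe_nonneg

end Aux

set_option maxHeartbeats 2000000 in
/-- The crossing-time function ν is continuous on an open neighborhood of the boundary
of the closure of a bounded robust safety certificate. -/
theorem crossing_time_continuous {n : ℕ}
    (f : EuclideanSpace ℝ (Fin n) → EuclideanSpace ℝ (Fin n)) (hf : ContDiff ℝ (⊤ : ℕ∞) f)
    (φ : EuclideanSpace ℝ (Fin n) → ℝ → EuclideanSpace ℝ (Fin n))
    (hφ0 : ∀ x, φ x 0 = x)
    (hφd : ∀ x t, HasDerivAt (φ x) (f (φ x t)) t)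
    (hφa : ∀ x s t, φ (φ x s) t = φ x (s + t))
    (I U V : Set (EuclideanSpace ℝ (Fin n))) (μ : ℝ) (hμ : 0 < μ)
    (hVbdd : Bornology.IsBounded V)
    (hIV : I ⊆ V) (hInv : reach f μ (Set.Ici 0) V ⊆ V) (hVU : V ∩ U = ∅) :
    ∃ N : Set (EuclideanSpace ℝ (Fin n)), IsOpen N ∧
      frontier (closure V) ⊆ N ∧ N ⊆ flowReach φ Set.univ (frontier (closure V)) ∧
      ∃ ν : EuclideanSpace ℝ (Fin n) → ℝ, ContinuousOn ν N ∧
        ∀ x ∈ N, φ x (-(ν x)) ∈ frontier (closure V) := by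
  have hφcont : ∀ z : EuclideanSpace ℝ (Fin n), Continuous (φ z) := by
    intro z
    rw [continuous_iff_continuousAt]; exact fun u => (hφd z u).differentiableAt.continuousAt
  -- basic constants
  obtain ⟨R₀, hR₀⟩ := hVbdd.subset_closedBall 0
  set R := max R₀ 0 with hRdef
  have hR0 : 0 ≤ R := le_max_right _ _
  have hVR : V ⊆ closedBall 0 R := hR₀.trans (closedBall_subset_closedBall (le_max_left _ _))
  set W := closure V with hWdef
  have hWc : IsClosed W := isClosed_closure
  have hWR : W ⊆ closedBall 0 R := closure_minimal hVR Metric.isClosed_closedBall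
  have hKcomp : IsCompact (closedBall (0:EuclideanSpace ℝ (Fin n)) (R+4)) := isCompact_closedBall _ _
  obtain ⟨M₀, hM₀⟩ := hKcomp.exists_bound_of_continuousOn hf.continuous.continuousOn
  set M := max M₀ 0 with hMdef
  have hM0 : 0 ≤ M := le_max_right _ _
  have hM : ∀ z : EuclideanSpace ℝ (Fin n), ‖z‖ ≤ R+4 → ‖f z‖ ≤ M := fun z hz =>
    le_trans (hM₀ z (mem_closedBall_zero_iff.2 hz)) (le_max_left _ _)
  -- Lipschitz constant
  obtain ⟨C₀, hC₀⟩ := hKcomp.exists_bound_of_continuousOn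
    (hf.continuous_fderiv (by simp)).continuousOn
  set L : ℝ≥0 := ⟨max C₀ 0, le_max_right _ _⟩ with hLdef
  have hLbound : ∀ z ∈ closedBall (0:EuclideanSpace ℝ (Fin n)) (R+4), ‖fderiv ℝ f z‖₊ ≤ L := by
    intro z hz
    rw [← NNReal.coe_le_coe, coe_nnnorm]
    exact le_trans (hC₀ z hz) (le_max_left _ _)
  have hLip : LipschitzOnWith L f (closedBall (0:EuclideanSpace ℝ (Fin n)) (R+4)) :=
    (convex_closedBall _ _).lipschitzOnWith_of_nnnorm_fderiv_le
      (fun z _ => hf.differentiable (by simp) z) hLbound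
  have hLipR : ∀ a : EuclideanSpace ℝ (Fin n), ‖a‖ ≤ R+4 → ∀ b : EuclideanSpace ℝ (Fin n), ‖b‖ ≤ R+4 → ‖f a - f b‖ ≤ L * ‖a - b‖ := by
    intro a ha b hb
    rw [← dist_eq_norm, ← dist_eq_norm]
    exact hLip.dist_le_mul a (mem_closedBall_zero_iff.2 ha) b (mem_closedBall_zero_iff.2 hb)
  -- time scales
  set τ := 1/(2*(M+1)) with hτdef
  have hτpos : 0 < τ := by rw [hτdef]; positivity
  have hτM : M * τ < 1 := by
    rw [hτdef, mul_one_div, div_lt_iff₀ (by positivity)]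
    nlinarith
  -- escape estimate
  have hesc : ∀ x : EuclideanSpace ℝ (Fin n), ‖x‖ ≤ R+3 → ∀ t : ℝ, |t| ≤ τ → ‖φ x t - x‖ < 1 := by
    intro x hx t ht
    rcases le_or_gt 0 t with h0 | h0
    · have key := escape_aux (c := φ x) (F := fun u => f (φ x u)) (hφd x) hM0 hτM ?_ t
        ⟨h0, le_trans (le_abs_self t) ht⟩
      · rwa [hφ0] at key
      · intro u _ hu1
        rw [hφ0] at hu1
        refine hM _ ?_
        calc ‖φ x u‖ ≤ ‖φ x u - x‖ + ‖x‖ := by simpa using norm_add_le (φ x u - x) x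
        _ ≤ 1 + (R+3) := add_le_add hu1 hx
        _ ≤ R + 4 := by linarith
    · have hd : ∀ u : ℝ, HasDerivAt (fun u => φ x (-u)) (-f (φ x (-u))) u := by
        intro u
        have h1 := (hφd x (-u)).scomp u (hasDerivAt_neg u)
        simpa [Function.comp_def] using h1
      have key := escape_aux (c := fun u => φ x (-u)) (F := fun u => -f (φ x (-u))) hd hM0 hτM ?_
        (-t) ⟨neg_nonneg.2 h0.le, le_trans (neg_le_abs t) ht⟩
      · simpa [hφ0] using key
      · intro u _ hu1
        simp only [neg_zero, hφ0] at hu1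
        simp only [norm_neg]
        refine hM _ ?_
        calc ‖φ x (-u)‖ ≤ ‖φ x (-u) - x‖ + ‖x‖ := by
              simpa using norm_add_le (φ x (-u) - x) x
        _ ≤ 1 + (R+3) := add_le_add hu1 hx
        _ ≤ R + 4 := by linarith
  have hescn : ∀ x : EuclideanSpace ℝ (Fin n), ‖x‖ ≤ R+3 → ∀ t : ℝ, |t| ≤ τ → ‖φ x t‖ ≤ R + 4 := by
    intro x hx t ht
    calc ‖φ x t‖ ≤ ‖φ x t - x‖ + ‖x‖ := by simpa using norm_add_le (φ x t - x) x
    _ ≤ 1 + (R+3) := add_le_add (hesc x hx t ht).le hx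
    _ = R + 4 := by ring
  have hmemK : ∀ x : EuclideanSpace ℝ (Fin n), ‖x‖ ≤ R+3 → ∀ u : ℝ, |u| ≤ τ → φ x u ∈ closedBall (0:EuclideanSpace ℝ (Fin n)) (R+4) :=
    fun x hx u hu => mem_closedBall_zero_iff.2 (hescn x hx u hu)
  have hGron : ∀ x y : EuclideanSpace ℝ (Fin n), ‖x‖ ≤ R+3 → ‖y‖ ≤ R+3 → ∀ t : ℝ, |t| ≤ τ →
      dist (φ x t) (φ y t) ≤ dist x y * Real.exp (L * τ) :=
    fun x y hx hy t ht => gronwall_aux hφ0 hφd hLip (hmemK x hx) (hmemK y hy) ht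
  -- the scale δ
  set δ := min τ (min (1/((L:ℝ)+1)) (1/(μ+1))) with hδdef
  have hδpos : 0 < δ := by
    rw [hδdef]
    refine lt_min hτpos (lt_min (by positivity) (by positivity))
  have hδτ : δ ≤ τ := min_le_left _ _
  have hδL : δ * (L:ℝ) ≤ 1 := by
    have h1 : δ ≤ 1/((L:ℝ)+1) := le_trans (min_le_right _ _) (min_le_left _ _)
    have h2 : (0:ℝ) ≤ L := L.coe_nonneg
    rw [le_div_iff₀ (by positivity)] at h1
    nlinarith
  have hδμ : δ * μ ≤ 1 := by
    have h1 : δ ≤ 1/(μ+1) := le_trans (min_le_right _ _) (min_le_right _ _)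
    rw [le_div_iff₀ (by positivity)] at h1
    nlinarith
  -- ball lemma: robustness pushes a whole ball into V
  have hball : ∀ x ∈ W, ∀ t : ℝ, 0 < t → t ≤ δ → ∀ y : EuclideanSpace ℝ (Fin n),
      dist y (φ x t) < μ*t/4 → y ∈ V := by
    intro x hx t ht0 htδ y hy
    have hxR : ‖x‖ ≤ R := mem_closedBall_zero_iff.1 (hWR hx)
    obtain ⟨x', hx'V, hxx'⟩ := Metric.mem_closure_iff.1 hx (μ*t/4) (by positivity)
    set u : EuclideanSpace ℝ (Fin n) := x' - x with hudef
    set w : EuclideanSpace ℝ (Fin n) := y - φ x t with hwdef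
    have hu : ‖u‖ < μ*t/4 := by
      rw [hudef, ← dist_eq_norm, dist_comm]; exact hxx'
    have hw : ‖w‖ < μ*t/4 := by
      rw [hwdef, ← dist_eq_norm]; exact hy
    have huw : ‖u‖ + ‖w‖ < μ*t/2 := by linarith
    have huw0 : 0 ≤ ‖u‖ + ‖w‖ := by positivity
    have hμt : μ*t ≤ 1 := by
      have : t * μ ≤ δ * μ := mul_le_mul_of_nonneg_right htδ hμ.le
      nlinarith
    set c : ℝ → EuclideanSpace ℝ (Fin n) :=
      fun s => φ x s + (1 - s/t) • u + (s/t) • w with hcdef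
    have hcd : ∀ s, HasDerivAt c (f (φ x s) + (-(1/t)) • u + (1/t) • w) s := by
      intro s
      have h1 : HasDerivAt (fun s : ℝ => 1 - s/t) (-(1/t)) s := by
        simpa using ((hasDerivAt_id s).div_const t).const_sub (1:ℝ)
      have h2 : HasDerivAt (fun s : ℝ => s/t) (1/t) s := by
        simpa using (hasDerivAt_id s).div_const t
      exact ((hφd x s).add (h1.smul_const u)).add (h2.smul_const w)
    have hcdiff : Differentiable ℝ c := fun s => (hcd s).differentiableAt
    have hc0 : c 0 = x' := by
      simp [hcdef, hφ0, hudef]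
    have hct : c t = y := by
      simp [hcdef, div_self (ne_of_gt ht0), hwdef]
    have hbound : ∀ s ∈ Icc (0:ℝ) t, ‖deriv c s - f (c s)‖ ≤ μ := by
      intro s hs
      rw [(hcd s).deriv]
      have hst0 : 0 ≤ s/t := div_nonneg hs.1 ht0.le
      have hst1 : s/t ≤ 1 := (div_le_one ht0).2 hs.2
      have hcs : ‖c s - φ x s‖ ≤ ‖u‖ + ‖w‖ := by
        have hre : c s - φ x s = (1 - s/t) • u + (s/t) • w := by
          simp only [hcdef]; abel
        rw [hre]
        refine le_trans (norm_add_le _ _) ?_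
        rw [norm_smul, norm_smul, Real.norm_eq_abs, Real.norm_eq_abs,
          abs_of_nonneg (by linarith), abs_of_nonneg hst0]
        nlinarith [norm_nonneg u, norm_nonneg w]
      have hsτ : |s| ≤ τ := by
        rw [abs_of_nonneg hs.1]; exact le_trans hs.2 (le_trans htδ hδτ)
      have hφs : ‖φ x s‖ ≤ R + 4 := hescn x (by linarith) s hsτ
      have hφs1 : ‖φ x s - x‖ < 1 := hesc x (by linarith) s hsτ
      have hφs2 : ‖φ x s‖ ≤ R + 1 := by
        calc ‖φ x s‖ ≤ ‖φ x s - x‖ + ‖x‖ := by simpa using norm_add_le (φ x s - x) x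
        _ ≤ 1 + R := add_le_add hφs1.le hxR
        _ = R + 1 := by ring
      have hcsn : ‖c s‖ ≤ R + 4 := by
        calc ‖c s‖ ≤ ‖c s - φ x s‖ + ‖φ x s‖ := by simpa using norm_add_le (c s - φ x s) (φ x s)
        _ ≤ (‖u‖ + ‖w‖) + (R+1) := add_le_add hcs hφs2
        _ ≤ μ*t/2 + (R+1) := by linarith
        _ ≤ R + 4 := by nlinarith
      have hfd : ‖f (φ x s) - f (c s)‖ ≤ (L:ℝ) * (‖u‖ + ‖w‖) := by
        refine le_trans (hLipR _ hφs _ hcsn) ?_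
        have : ‖φ x s - c s‖ = ‖c s - φ x s‖ := norm_sub_rev _ _
        rw [this]
        exact mul_le_mul_of_nonneg_left hcs L.coe_nonneg
      have hre2 : f (φ x s) + (-(1/t)) • u + (1/t) • w - f (c s)
          = (f (φ x s) - f (c s)) + ((-(1/t)) • u + (1/t) • w) := by abel
      rw [hre2]
      have hn2 : ‖(-(1/t)) • u + (1/t) • w‖ ≤ (‖u‖ + ‖w‖)/t := by
        refine le_trans (norm_add_le _ _) ?_
        simp only [norm_smul, Real.norm_eq_abs, abs_neg,
          abs_of_nonneg (by positivity : (0:ℝ) ≤ 1/t)]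
        rw [add_div, one_div_mul_eq_div, one_div_mul_eq_div]
      refine le_trans (norm_add_le _ _) ?_
      have hLt : (L:ℝ) * t ≤ 1 := by
        have := mul_le_mul_of_nonneg_right htδ L.coe_nonneg
        rw [mul_comm] at this
        exact le_trans this hδL
      have h1 : (L:ℝ) * (‖u‖ + ‖w‖) ≤ μ/2 := by
        have h2 : (L:ℝ) * (‖u‖ + ‖w‖) ≤ (L:ℝ) * (μ*t/2) :=
          mul_le_mul_of_nonneg_left huw.le L.coe_nonneg
        nlinarith [L.coe_nonneg]
      have h3 : (‖u‖ + ‖w‖)/t ≤ μ/2 := by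
        rw [div_le_iff₀ ht0]
        nlinarith
      linarith [le_trans hfd h1, le_trans hn2 h3]
    exact hInv ⟨t, mem_Ici.2 ht0.le, c, hcdiff, by rw [hc0]; exact hx'V, hct, hbound⟩
  -- interior lemma
  have hint : ∀ x ∈ W, ∀ t : ℝ, 0 < t → t ≤ δ → φ x t ∈ interior W := by
    intro x hx t ht0 htδ
    refine mem_interior.2 ⟨ball (φ x t) (μ*t/4), ?_, isOpen_ball, mem_ball_self (by positivity)⟩
    exact fun y hy => subset_closure (hball x hx t ht0 htδ y (mem_ball.1 hy))
  -- exterior lemma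
  have hout : ∀ b ∈ frontier W, ∀ t : ℝ, 0 < t → t ≤ δ → φ b (-t) ∉ W := by
    intro b hb t ht0 htδ hcon
    have h1 := hint _ hcon t ht0 htδ
    rw [hφa] at h1
    have h2 : -t + t = 0 := by ring
    rw [h2, hφ0] at h1
    rw [hWc.frontier_eq] at hb
    exact hb.2 h1
  have hIccmem : -(δ/2) ∈ Icc (-(δ/2)) (δ/2) := ⟨le_refl _, by linarith⟩
  have hδ2τ : ∀ t : ℝ, t ∈ Icc (-(δ/2)) (δ/2) → |t| ≤ τ := by
    intro t ht
    rw [abs_le]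
    exact ⟨by linarith [ht.1], by linarith [ht.2]⟩
  set N := {y : EuclideanSpace ℝ (Fin n) |
    φ y (δ/2) ∈ interior W ∧ φ y (-(δ/2)) ∉ W} with hNdef
  have hNnorm : ∀ y ∈ N, ‖y‖ ≤ R + 1 := by
    intro y hy
    have h1 : φ y (δ/2) ∈ W := interior_subset hy.1
    have h2 : ‖φ y (δ/2)‖ ≤ R := mem_closedBall_zero_iff.1 (hWR h1)
    have h3 : φ (φ y (δ/2)) (-(δ/2)) = y := by
      rw [hφa]; simp [hφ0]
    have h4 := hesc (φ y (δ/2)) (by linarith) (-(δ/2))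
      (by rw [abs_neg, abs_of_nonneg (by linarith : (0:ℝ) ≤ δ/2)]; linarith)
    rw [h3] at h4
    calc ‖y‖ ≤ ‖y - φ y (δ/2)‖ + ‖φ y (δ/2)‖ := by
          simpa using norm_add_le (y - φ y (δ/2)) (φ y (δ/2))
    _ ≤ 1 + R := add_le_add h4.le h2
    _ = R + 1 := by ring
  set σ : EuclideanSpace ℝ (Fin n) → ℝ :=
    fun y => sSup {t | t ∈ Icc (-(δ/2)) (δ/2) ∧ φ y t ∉ W} with hσdef
  have hstruct : ∀ y ∈ N, σ y ∈ Ioo (-(δ/2)) (δ/2) ∧ φ y (σ y) ∈ frontier W ∧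
      (∀ t ∈ Icc (-(δ/2)) (δ/2), t < σ y → φ y t ∉ W) ∧
      (∀ t ∈ Icc (-(δ/2)) (δ/2), σ y < t → φ y t ∈ interior W) := by
    intro y hy
    set S := {t | t ∈ Icc (-(δ/2)) (δ/2) ∧ φ y t ∉ W} with hSdef
    have hSne : S.Nonempty := ⟨-(δ/2), hIccmem, hy.2⟩
    have hSbdd : BddAbove S := ⟨δ/2, fun t ht => ht.1.2⟩
    have hσS : σ y = sSup S := rfl
    have h1 : -(δ/2) ≤ σ y := le_csSup hSbdd ⟨hIccmem, hy.2⟩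
    have h2 : σ y ≤ δ/2 := csSup_le hSne (fun t ht => ht.1.2)
    have hW1 : φ y (σ y) ∈ W := by
      by_contra hcon
      have hop : IsOpen (φ y ⁻¹' Wᶜ) := hWc.isOpen_compl.preimage (hφcont y)
      obtain ⟨η, hη0, hηsub⟩ := Metric.isOpen_iff.1 hop (σ y) hcon
      have hne : σ y ≠ δ/2 := by
        intro heq
        apply hcon
        rw [heq]
        exact interior_subset hy.1
      have hlt : σ y < δ/2 := lt_of_le_of_ne h2 hne
      have ht'S : min (σ y + η/2) (δ/2) ∈ S := by
        refine ⟨⟨le_min (by linarith) (by linarith), min_le_right _ _⟩, ?_⟩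
        refine hηsub ?_
        rw [mem_ball, Real.dist_eq, abs_lt]
        constructor
        · rcases le_total (σ y + η/2) (δ/2) with h | h
          · rw [min_eq_left h]; linarith
          · rw [min_eq_right h]; linarith
        · rcases le_total (σ y + η/2) (δ/2) with h | h
          · rw [min_eq_left h]; linarith
          · rw [min_eq_right h]; linarith
      have hle := le_csSup hSbdd ht'S
      have hgt : σ y < min (σ y + η/2) (δ/2) := lt_min (by linarith) hlt
      rw [← hσS] at hle
      linarith
    have hW2 : φ y (σ y) ∉ interior W := by
      intro hcon
      have hop : IsOpen (φ y ⁻¹' interior W) := isOpen_interior.preimage (hφcont y)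
      obtain ⟨η, hη0, hηsub⟩ := Metric.isOpen_iff.1 hop (σ y) hcon
      have hub : ∀ t ∈ S, t ≤ σ y - η/2 := by
        intro t ht
        by_contra hcon2
        push_neg at hcon2
        have htle : t ≤ σ y := le_csSup hSbdd ht
        have hmem : t ∈ ball (σ y) η := by
          rw [mem_ball, Real.dist_eq, abs_lt]
          exact ⟨by linarith, by linarith⟩
        exact ht.2 (interior_subset (hηsub hmem))
      have h5 := csSup_le hSne hub
      rw [← hσS] at h5
      linarith
    have hfront : φ y (σ y) ∈ frontier W := by
      rw [hWc.frontier_eq]; exact ⟨hW1, hW2⟩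
    have hne1 : σ y ≠ -(δ/2) := by
      intro heq
      rw [heq] at hW1
      exact hy.2 hW1
    have hne2 : σ y ≠ δ/2 := fun heq => hW2 (by rw [heq]; exact hy.1)
    refine ⟨⟨lt_of_le_of_ne h1 (Ne.symm hne1), lt_of_le_of_ne h2 hne2⟩, hfront, ?_, ?_⟩
    · intro t ht htσ
      have heq : φ y t = φ (φ y (σ y)) (-(σ y - t)) := by
        rw [hφa]
        congr 1
        ring
      rw [heq]
      exact hout _ hfront (σ y - t) (by linarith) (by linarith [ht.1])
    · intro t ht hσt
      have heq : φ y t = φ (φ y (σ y)) (t - σ y) := by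
        rw [hφa]
        congr 1
        ring
      rw [heq]
      exact hint _ hW1 (t - σ y) (by linarith) (by linarith [ht.2])
  -- openness of N
  have hNopen : IsOpen N := by
    rw [Metric.isOpen_iff]
    intro y hy
    obtain ⟨r₁, hr₁0, hr₁⟩ := Metric.isOpen_iff.1 isOpen_interior _ hy.1
    obtain ⟨r₂, hr₂0, hr₂⟩ := Metric.isOpen_iff.1 hWc.isOpen_compl _ hy.2
    refine ⟨min 1 (min r₁ r₂ / (2 * Real.exp (L*τ))), lt_min one_pos (by positivity), ?_⟩
    intro y' hy'
    rw [mem_ball] at hy'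
    have hyd1 : dist y' y < 1 := lt_of_lt_of_le hy' (min_le_left _ _)
    have hyd2 : dist y' y < min r₁ r₂ / (2 * Real.exp (L*τ)) :=
      lt_of_lt_of_le hy' (min_le_right _ _)
    have hy'n : ‖y'‖ ≤ R + 3 := by
      have hyn := hNnorm y hy
      rw [dist_eq_norm] at hyd1
      calc ‖y'‖ ≤ ‖y' - y‖ + ‖y‖ := by simpa using norm_add_le (y' - y) y
      _ ≤ 1 + (R+1) := add_le_add hyd1.le hyn
      _ ≤ R + 3 := by linarith
    have hkey : ∀ c : ℝ, |c| ≤ τ → dist (φ y' c) (φ y c) < min r₁ r₂ := by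
      intro c hc
      have hg := hGron y' y hy'n (by linarith [hNnorm y hy]) c hc
      have hexp : (0:ℝ) < Real.exp (L*τ) := Real.exp_pos _
      calc dist (φ y' c) (φ y c) ≤ dist y' y * Real.exp (L*τ) := hg
      _ < (min r₁ r₂ / (2 * Real.exp (L*τ))) * Real.exp (L*τ) :=
          mul_lt_mul_of_pos_right hyd2 hexp
      _ = min r₁ r₂ / 2 := by field_simp
      _ < min r₁ r₂ := by
          have : 0 < min r₁ r₂ := lt_min hr₁0 hr₂0
          linarith
    have habs1 : |δ/2| ≤ τ := hδ2τ _ ⟨by linarith, le_refl _⟩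
    have habs2 : |(-(δ/2))| ≤ τ := hδ2τ _ hIccmem
    constructor
    · exact hr₁ (mem_ball.2 (lt_of_lt_of_le (hkey (δ/2) habs1) (min_le_left _ _)))
    · intro hcon
      exact hr₂ (mem_ball.2 (lt_of_lt_of_le (hkey (-(δ/2)) habs2) (min_le_right _ _))) hcon
  -- B ⊆ N
  have hBN : frontier W ⊆ N := by
    intro b hb
    have hbW : b ∈ W := by
      have := hb
      rw [hWc.frontier_eq] at this
      exact this.1
    exact ⟨hint b hbW (δ/2) (by linarith) (by linarith),
      hout b hb (δ/2) (by linarith) (by linarith)⟩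
  -- N ⊆ flowReach
  have hNreach : N ⊆ flowReach φ univ (frontier W) := by
    intro y hy
    obtain ⟨hIoo, hfront, _, _⟩ := hstruct y hy
    refine ⟨φ y (σ y), hfront, -(σ y), mem_univ _, ?_⟩
    rw [hφa]
    simp [hφ0]
  -- continuity of σ on N
  have hcontσ : ContinuousOn σ N := by
    rw [Metric.continuousOn_iff]
    intro y hy ε hε0
    obtain ⟨hIoo, hfront, hlo, hhi⟩ := hstruct y hy
    obtain ⟨hε', hε'0, hε'1, hε'2, hε'3⟩ :
        ∃ ε' : ℝ, 0 < ε' ∧ ε' ≤ ε/2 ∧ ε' ≤ (δ/2 - σ y)/2 ∧ ε' ≤ (σ y + δ/2)/2 := by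
      refine ⟨min (ε/2) (min ((δ/2 - σ y)/2) ((σ y + δ/2)/2)), ?_, min_le_left _ _,
        le_trans (min_le_right _ _) (min_le_left _ _),
        le_trans (min_le_right _ _) (min_le_right _ _)⟩
      exact lt_min (by linarith) (lt_min (by linarith [hIoo.2]) (by linarith [hIoo.1]))
    have hmem1 : σ y + hε' ∈ Icc (-(δ/2)) (δ/2) := ⟨by linarith [hIoo.1], by linarith⟩
    have hmem2 : σ y - hε' ∈ Icc (-(δ/2)) (δ/2) := ⟨by linarith, by linarith [hIoo.2]⟩
    have hin : φ y (σ y + hε') ∈ interior W := hhi _ hmem1 (by linarith)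
    have hout2 : φ y (σ y - hε') ∉ W := hlo _ hmem2 (by linarith)
    obtain ⟨r₁, hr₁0, hr₁⟩ := Metric.isOpen_iff.1 isOpen_interior _ hin
    obtain ⟨r₂, hr₂0, hr₂⟩ := Metric.isOpen_iff.1 hWc.isOpen_compl _ hout2
    refine ⟨min 1 (min r₁ r₂ / (2 * Real.exp (L*τ))), lt_min one_pos (by positivity), ?_⟩
    intro y' hy'N hdist
    obtain ⟨hIoo', hfront', hlo', hhi'⟩ := hstruct y' hy'N
    have hyd1 : dist y' y < 1 := lt_of_lt_of_le hdist (min_le_left _ _)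
    have hyd2 : dist y' y < min r₁ r₂ / (2 * Real.exp (L*τ)) :=
      lt_of_lt_of_le hdist (min_le_right _ _)
    have hy'n : ‖y'‖ ≤ R + 3 := by linarith [hNnorm y' hy'N]
    have hkey : ∀ c : ℝ, |c| ≤ τ → dist (φ y' c) (φ y c) < min r₁ r₂ := by
      intro c hc
      have hg := hGron y' y hy'n (by linarith [hNnorm y hy]) c hc
      have hexp : (0:ℝ) < Real.exp (L*τ) := Real.exp_pos _
      calc dist (φ y' c) (φ y c) ≤ dist y' y * Real.exp (L*τ) := hg
      _ < (min r₁ r₂ / (2 * Real.exp (L*τ))) * Real.exp (L*τ) :=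
          mul_lt_mul_of_pos_right hyd2 hexp
      _ = min r₁ r₂ / 2 := by field_simp
      _ < min r₁ r₂ := by
          have : 0 < min r₁ r₂ := lt_min hr₁0 hr₂0
          linarith
    have h5 : φ y' (σ y + hε') ∈ W :=
      interior_subset (hr₁ (mem_ball.2
        (lt_of_lt_of_le (hkey _ (hδ2τ _ hmem1)) (min_le_left _ _))))
    have h6 : φ y' (σ y - hε') ∉ W :=
      hr₂ (mem_ball.2 (lt_of_lt_of_le (hkey _ (hδ2τ _ hmem2)) (min_le_right _ _)))
    have h7 : σ y' ≤ σ y + hε' := by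
      by_contra hcon
      push_neg at hcon
      exact (hlo' _ hmem1 hcon) h5
    have h8 : σ y - hε' ≤ σ y' := by
      by_contra hcon
      push_neg at hcon
      exact h6 (interior_subset (hhi' _ hmem2 hcon))
    rw [Real.dist_eq]
    have habs : |σ y' - σ y| ≤ hε' := abs_le.2 ⟨by linarith, by linarith⟩
    linarith
  refine ⟨N, hNopen, hBN, hNreach, fun y => -(σ y), hcontσ.neg, fun x hx => ?_⟩
  rw [neg_neg]
  exact (hstruct x hx).2.1
end
end

section
/- Let f : ℝⁿ → ℝⁿ be smooth, ε > 0, V ⊆ ℝⁿ, and Δ > 0 such that R_{f,ε}^{Δ}(V) ⊆ V. Then for every Δ' ≥ Δ, R_{f,ε}(R_{f,ε}^{[0,Δ']}(V)) ⊆ R_{f,ε}^{[0,Δ']}(V). -/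
open Set
open scoped RealInnerProductSpace

noncomputable section

namespace ReachAux

def pc {F : Type*} (c : ℝ) (u v : ℝ → F) : ℝ → F := fun w => if w ≤ c then u w else v w

theorem pc_hasDerivAt {F : Type*} [NormedAddCommGroup F] [NormedSpace ℝ F]
    {u v : ℝ → F} {c : ℝ} (hu : Differentiable ℝ u) (hv : Differentiable ℝ v)
    (hval : u c = v c) (hder : deriv u c = deriv v c) (w : ℝ) :
    HasDerivAt (pc c u v) (if w ≤ c then deriv u w else deriv v w) w := by
  rcases lt_trichotomy w c with hw | rfl | hw
  · rw [if_pos hw.le]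
    have he : pc c u v =ᶠ[nhds w] u := by
      filter_upwards [Iio_mem_nhds hw] with r hr
      exact if_pos (le_of_lt hr)
    exact ((hu w).hasDerivAt).congr_of_eventuallyEq he
  · rw [if_pos le_rfl]
    have hL : HasDerivWithinAt (pc w u v) (deriv u w) (Iic w) w :=
      ((hu w).hasDerivAt.hasDerivWithinAt).congr (fun r hr => if_pos hr) (if_pos le_rfl)
    have hR : HasDerivWithinAt (pc w u v) (deriv u w) (Ici w) w := by
      rw [hder]
      refine ((hv w).hasDerivAt.hasDerivWithinAt).congr (fun r hr => ?_) ?_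
      · rcases eq_or_lt_of_le (Set.mem_Ici.mp hr) with h | h
        · simp only [pc, ← h, if_pos le_rfl]; exact hval
        · exact if_neg (not_le.mpr h)
      · simp only [pc, if_pos le_rfl]; exact hval
    have h2 := hL.union hR
    rw [Iic_union_Ici] at h2
    exact hasDerivWithinAt_univ.mp h2
  · rw [if_neg (not_le.mpr hw)]
    have he : pc c u v =ᶠ[nhds w] v := by
      filter_upwards [Ioi_mem_nhds hw] with r hr
      exact if_neg (not_le.mpr hr)
    exact ((hv w).hasDerivAt).congr_of_eventuallyEq he

theorem hasDerivAt_shift {F : Type*} [NormedAddCommGroup F] [NormedSpace ℝ F] {x : ℝ → F}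
    (hx : Differentiable ℝ x) (c w : ℝ) :
    HasDerivAt (fun u => x (u + c)) (deriv x (w + c)) w := by
  have := HasDerivAt.scomp (g₁ := x) w ((hx (w + c)).hasDerivAt) ((hasDerivAt_id w).add_const c)
  simpa [Function.comp_def] using this

variable {n : ℕ} {f : EuclideanSpace ℝ (Fin n) → EuclideanSpace ℝ (Fin n)}
  {ε : ℝ} {X : Set (EuclideanSpace ℝ (Fin n))}

set_option maxHeartbeats 2000000 in
theorem norm_smul_le_of_le {V : Type*} [NormedAddCommGroup V] [NormedSpace ℝ V]
    {r : ℝ} {v : V} {c : ℝ} (hr : 0 ≤ r) (h : ‖v‖ ≤ c) : ‖r • v‖ ≤ r * c := by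
  rw [norm_smul, Real.norm_eq_abs, abs_of_nonneg hr]
  exact mul_le_mul_of_nonneg_left h hr

theorem scalar_ramp {ε μ L w B θ ρ : ℝ} (hθ0 : 0 ≤ θ) (hθ1 : θ ≤ 1) (hw : w = θ*ρ)
    (hLρB : L*(ρ*B) ≤ μ/16) (hL0 : 0 ≤ L) (hB0 : 0 ≤ B) (hρ0 : 0 ≤ ρ) (hμ0 : 0 ≤ μ) :
    (1-θ)*(ε + L*(w*B)) + θ*(ε - 3*μ/8) ≤ ε := by
  have h1 : L*(w*B) = θ*(L*(ρ*B)) := by rw [hw]; ring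
  have h2 : θ*(L*(ρ*B)) ≤ θ*(μ/16) := mul_le_mul_of_nonneg_left hLρB hθ0
  have h3 : 0 ≤ θ*(L*(ρ*B)) := by positivity
  have h4 : 0 ≤ θ*μ := mul_nonneg hθ0 hμ0
  have h5 : (1-θ)*(L*(w*B)) ≤ θ*(μ/16) := by
    calc (1-θ)*(L*(w*B)) ≤ 1*(L*(w*B)) := by
          apply mul_le_mul_of_nonneg_right (by linarith)
          rw [h1]; exact h3
      _ = θ*(L*(ρ*B)) := by rw [one_mul, h1]
      _ ≤ θ*(μ/16) := h2
  nlinarith [h4, h5]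

theorem scalar_cs {ε μ δ₁ h ν : ℝ} (hh0 : 0 < h) (hμpos : 0 < μ) (hδ₁pos : 0 < δ₁)
    (hνeq : ν = 2*ε - 2*μ) (k1 : δ₁*(3+2*ε) ≤ μ/2) :
    h * ν + 2*(δ₁*h) + ((δ₁*h)/2)*(2*(ε+1)) ≤ (ε - μ/2) * (2*h - δ₁*h) := by
  have hA := mul_le_mul_of_nonneg_left k1 hh0.le
  have hB : 0 ≤ h*δ₁*μ := by positivity
  nlinarith [hA, hB]

theorem reach_mono_time {T T' : Set ℝ} (h : T ⊆ T') : reach f ε T X ⊆ reach f ε T' X := by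
  rintro y ⟨t, ht, hx⟩; exact ⟨t, h ht, hx⟩

theorem reach_cut {y : EuclideanSpace ℝ (Fin n)} {t Δ : ℝ}
    (hV : reach f ε {Δ} V ⊆ V) (hΔt : Δ ≤ t) (hΔ : 0 ≤ Δ)
    (hy : y ∈ reach f ε {t} V) : y ∈ reach f ε {t - Δ} V := by
  obtain ⟨t', ht', x, hxd, hx0, hxt, hxb⟩ := hy
  rw [Set.mem_singleton_iff] at ht'
  subst ht'
  have hxΔ : x Δ ∈ V :=
    hV ⟨Δ, rfl, x, hxd, hx0, rfl, fun u hu => hxb u ⟨hu.1, hu.2.trans hΔt⟩⟩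
  refine ⟨t' - Δ, rfl, fun u => x (u + Δ), ?_, ?_, ?_, ?_⟩
  · exact hxd.comp ((differentiable_id).add_const Δ)
  · simpa using hxΔ
  · simp [hxt]
  · intro u hu
    rw [(hasDerivAt_shift hxd Δ u).deriv]
    exact hxb (u + Δ) ⟨by linarith [hu.1], by linarith [hu.2]⟩

theorem reach_to_bloat {Δ Δ' : ℝ} (hΔ : 0 < Δ) (hΔ' : Δ ≤ Δ')
    (hV : reach f ε {Δ} V ⊆ V) :
    ∀ τ : ℝ, 0 ≤ τ → reach f ε {τ} V ⊆ reach f ε (Set.Icc 0 Δ') V := by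
  intro τ hτ
  obtain ⟨k, hk⟩ := Archimedean.arch τ hΔ
  induction k generalizing τ with
  | zero =>
    have : τ = 0 := le_antisymm (by simpa using hk) hτ
    exact reach_mono_time (by rw [this]; exact singleton_subset_iff.mpr ⟨le_rfl, by linarith⟩)
  | succ k ih =>
    by_cases hle : τ ≤ Δ'
    · exact reach_mono_time (singleton_subset_iff.mpr ⟨hτ, hle⟩)
    · intro y hy
      push_neg at hle
      have h1 : Δ ≤ τ := le_trans hΔ' hle.le
      have h2 := reach_cut hV h1 hΔ.le hy
      rw [succ_nsmul] at hk
      have h3 : τ - Δ ≤ k • Δ := by linarith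
      exact ih (τ - Δ) (by linarith) h3 h2


set_option maxHeartbeats 2000000 in
theorem reach_trans (hf : ContDiff ℝ (⊤ : ℕ∞) f) (hε : 0 < ε)
    {z y : EuclideanSpace ℝ (Fin n)} {s t : ℝ} (hs : 0 ≤ s) (ht : 0 ≤ t)
    (hz : z ∈ reach f ε {s} X)
    (hy : y ∈ reach f ε {t} ({z} : Set (EuclideanSpace ℝ (Fin n)))) :
    y ∈ reach f ε {s + t} X := by
  obtain ⟨s', hs', x₁, hx₁d, hx₁0, hx₁s, hx₁b⟩ := hz
  rw [Set.mem_singleton_iff] at hs'; subst hs'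
  obtain ⟨t', ht', x₂, hx₂d, hx₂z, hx₂t, hx₂b⟩ := hy
  rw [Set.mem_singleton_iff] at ht'; subst ht'
  rw [Set.mem_singleton_iff] at hx₂z
  -- shifted second curve
  have hx₂s' : ∀ w : ℝ, HasDerivAt (fun u => x₂ (u - s')) (deriv x₂ (w - s')) w := by
    intro w
    have := HasDerivAt.scomp (g₁ := x₂) w ((hx₂d (w - s')).hasDerivAt)
      ((hasDerivAt_id w).sub_const s')
    simpa [Function.comp_def] using this
  have hx₂sd : Differentiable ℝ (fun u => x₂ (u - s')) :=
    fun w => (hx₂s' w).differentiableAt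
  rcases eq_or_lt_of_le ht with ht0 | htpos
  · -- t = 0
    subst ht0
    refine ⟨s' + 0, rfl, x₁, hx₁d, hx₁0, ?_, ?_⟩
    · rw [add_zero, hx₁s, ← hx₂z]; exact hx₂t
    · rw [add_zero]; exact hx₁b
  rcases eq_or_lt_of_le hs with hs0 | hspos
  · -- s = 0
    subst hs0
    refine ⟨0 + t', rfl, x₂, hx₂d, ?_, ?_, ?_⟩
    · rw [hx₂z, ← hx₁s]; exact hx₁0
    · rw [zero_add]; exact hx₂t
    · rw [zero_add]; exact hx₂b
  -- main case: 0 < s', 0 < t'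
  by_cases hd : deriv x₁ s' = deriv x₂ 0
  · -- direct glue: junction derivatives match
    have hval : x₁ s' = (fun u => x₂ (u - s')) s' := by
      simp only [sub_self]; rw [hx₁s, hx₂z]
    have hder2 : deriv x₁ s' = deriv (fun u => x₂ (u - s')) s' := by
      rw [(hx₂s' s').deriv, sub_self]; exact hd
    have hg := pc_hasDerivAt hx₁d hx₂sd hval hder2
    refine ⟨s' + t', rfl, pc s' x₁ (fun u => x₂ (u - s')),
      fun w => (hg w).differentiableAt, ?_, ?_, ?_⟩
    · show pc s' x₁ _ 0 ∈ X
      simp only [pc, if_pos hs]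
      exact hx₁0
    · show pc s' x₁ _ (s' + t') = y
      have hns : ¬ (s' + t' ≤ s') := by linarith
      simp only [pc, if_neg hns]
      simpa [add_sub_cancel_left] using hx₂t
    · intro u hu
      rw [(hg u).deriv]
      by_cases hus : u ≤ s'
      · simp only [pc, if_pos hus]
        exact hx₁b u ⟨hu.1, hus⟩
      · simp only [pc, if_neg hus]
        rw [(hx₂s' u).deriv]
        exact hx₂b (u - s') ⟨by linarith [not_le.mp hus], by linarith [hu.2]⟩
  · -- bridge case
    have hE₁ : ‖deriv x₁ s' - f z‖ ≤ ε := by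
      have h0 := hx₁b s' ⟨hs, le_rfl⟩
      rwa [hx₁s] at h0
    have hE₂ : ‖deriv x₂ 0 - f z‖ ≤ ε := by
      have h0 := hx₂b 0 ⟨le_rfl, ht⟩
      rwa [hx₂z] at h0
    have hEne : (deriv x₁ s' - f z) ≠ (deriv x₂ 0 - f z) := by
      intro hcon
      exact hd (sub_left_injective hcon)
    have hνlt : ‖(deriv x₁ s' - f z) + (deriv x₂ 0 - f z)‖ < 2 * ε := by
      have hpar := parallelogram_law_with_norm ℝ (deriv x₁ s' - f z) (deriv x₂ 0 - f z)
      have hpos : 0 < ‖(deriv x₁ s' - f z) - (deriv x₂ 0 - f z)‖ := by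
        rw [norm_pos_iff, sub_ne_zero]; exact hEne
      nlinarith [norm_nonneg ((deriv x₁ s' - f z) + (deriv x₂ 0 - f z)),
        norm_nonneg (deriv x₁ s' - f z), norm_nonneg (deriv x₂ 0 - f z)]
    set ν := ‖(deriv x₁ s' - f z) + (deriv x₂ 0 - f z)‖ with hνdef
    have hν0 : 0 ≤ ν := norm_nonneg _
    set μ := ε - ν / 2 with hμdef
    have hμpos : 0 < μ := by rw [hμdef]; linarith
    have hμε : μ ≤ ε := by rw [hμdef]; linarith
    -- local Lipschitz bound near z
    obtain ⟨K, U, hU, hKf⟩ := ((hf.contDiffAt).of_le (by simp) :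
      ContDiffAt ℝ 1 f z).exists_lipschitzOnWith
    obtain ⟨r₀, hr₀pos, hball⟩ := Metric.mem_nhds_iff.mp hU
    set L : ℝ := (K : ℝ) with hLdef
    have hL0 : 0 ≤ L := K.coe_nonneg
    have hLip : ∀ p q : EuclideanSpace ℝ (Fin n), ‖p - z‖ ≤ r₀/2 → ‖q - z‖ ≤ r₀/2 →
        ‖f p - f q‖ ≤ L * ‖p - q‖ := by
      intro p q hp hq
      have hsub : Metric.closedBall z (r₀/2) ⊆ U :=
        (Metric.closedBall_subset_ball (by linarith)).trans hball
      have h0 := (hKf.mono hsub).dist_le_mul p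
        (by simpa [Metric.mem_closedBall, dist_eq_norm] using hp)
        q (by simpa [Metric.mem_closedBall, dist_eq_norm] using hq)
      simpa [dist_eq_norm] using h0
    set δ₁ := min (1/4 : ℝ) (μ / (2 * (3 + 2 * ε))) with hδ₁def
    have hδ₁pos : 0 < δ₁ := lt_min (by norm_num) (by positivity)
    have hδ₁le : δ₁ ≤ 1/4 := min_le_left _ _
    have hδ₁le2 : δ₁ ≤ μ / (2 * (3 + 2 * ε)) := min_le_right _ _
    set B := ‖f z‖ + ε + 1 with hBdef
    have hB1 : 1 ≤ B := by
      have := norm_nonneg (f z); rw [hBdef]; linarith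
    set D := ‖deriv x₁ s'‖ + ‖deriv x₂ 0‖ + 2 with hDdef
    have hDB : 0 < D + 2*B := by
      have h1 := norm_nonneg (deriv x₁ s'); have h2 := norm_nonneg (deriv x₂ 0)
      rw [hDdef]; linarith
    -- eventual smallness conditions, then pick h
    have ev₁ : ∀ᶠ h in nhdsWithin 0 (Set.Ioi (0:ℝ)),
        ‖x₁ (s' - h) - z + h • deriv x₁ s'‖ ≤ δ₁ * h := by
      have h2 := (hasDerivAt_iff_isLittleO.mp (hx₁d s').hasDerivAt).def hδ₁pos
      have h3 : Filter.Tendsto (fun h : ℝ => s' - h) (nhdsWithin 0 (Set.Ioi 0)) (nhds s') := by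
        have h4 : Filter.Tendsto (fun h : ℝ => s' - h) (nhds 0) (nhds (s' - 0)) :=
          (continuous_const.sub continuous_id).tendsto 0
        simpa using h4.mono_left nhdsWithin_le_nhds
      filter_upwards [h3.eventually h2, self_mem_nhdsWithin] with h hle hpos
      rw [hx₁s] at hle
      have he : s' - h - s' = -h := by ring
      rw [he] at hle
      have hpos' : (0:ℝ) < h := hpos
      calc ‖x₁ (s' - h) - z + h • deriv x₁ s'‖
          = ‖x₁ (s' - h) - z - (-h) • deriv x₁ s'‖ := by rw [neg_smul, sub_neg_eq_add]
        _ ≤ δ₁ * ‖-h‖ := hle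
        _ = δ₁ * h := by rw [norm_neg, Real.norm_eq_abs, abs_of_pos hpos']
    have ev₂ : ∀ᶠ h in nhdsWithin 0 (Set.Ioi (0:ℝ)),
        ‖x₂ h - z - h • deriv x₂ 0‖ ≤ δ₁ * h := by
      have h2 := (hasDerivAt_iff_isLittleO.mp (hx₂d 0).hasDerivAt).def hδ₁pos
      have h3 : Filter.Tendsto (fun h : ℝ => h) (nhdsWithin 0 (Set.Ioi (0:ℝ))) (nhds 0) :=
        Filter.tendsto_id.mono_left nhdsWithin_le_nhds
      filter_upwards [h3.eventually h2, self_mem_nhdsWithin] with h hle hpos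
      rw [hx₂z] at hle
      have hpos' : (0:ℝ) < h := hpos
      calc ‖x₂ h - z - h • deriv x₂ 0‖
          = ‖x₂ h - z - (h - 0) • deriv x₂ 0‖ := by rw [sub_zero]
        _ ≤ δ₁ * ‖h - 0‖ := hle
        _ = δ₁ * h := by rw [sub_zero, Real.norm_eq_abs, abs_of_pos hpos']
    set κ := min (min s' t')
      (min ((min (μ/8) (1/8)) / (L * (D + 2*B) + 1)) ((r₀/2) / (D + 2*B))) with hκdef
    have hLD1 : 0 < L * (D + 2*B) + 1 := by positivity
    have hκpos : 0 < κ := by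
      refine lt_min (lt_min hspos htpos) (lt_min ?_ ?_)
      · exact div_pos (lt_min (by linarith) (by norm_num)) hLD1
      · exact div_pos (by linarith) hDB
    have evκ : ∀ᶠ h in nhdsWithin 0 (Set.Ioi (0:ℝ)), h < κ :=
      Filter.eventually_of_mem (Ioo_mem_nhdsGT hκpos) (fun x hx => hx.2)
    obtain ⟨h, ⟨⟨hev₁, hev₂⟩, hκh⟩, hh0'⟩ :=
      (((ev₁.and ev₂).and evκ).and self_mem_nhdsWithin).exists
    have hh0 : 0 < h := hh0'
    have hhs' : h < s' := lt_of_lt_of_le hκh ((min_le_left _ _).trans (min_le_left _ _))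
    have hht' : h < t' := lt_of_lt_of_le hκh ((min_le_left _ _).trans (min_le_right _ _))
    have hmain1 : h ≤ (min (μ/8) (1/8)) / (L * (D + 2*B) + 1) :=
      hκh.le.trans ((min_le_right _ _).trans (min_le_left _ _))
    have hmain2 : h ≤ (r₀/2) / (D + 2*B) :=
      hκh.le.trans ((min_le_right _ _).trans (min_le_right _ _))
    have h5 : h * (L * (D + 2*B) + 1) ≤ min (μ/8) (1/8) := (le_div_iff₀ hLD1).mp hmain1
    have hLr : L * (h * (D + 2*B)) ≤ min (μ/8) (1/8) := by
      calc L * (h * (D + 2*B)) = h * (L * (D + 2*B)) := by ring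
        _ ≤ h * (L * (D + 2*B)) + h := by linarith
        _ = h * (L * (D + 2*B) + 1) := by ring
        _ ≤ min (μ/8) (1/8) := h5
    have hLrμ : L * (h * (D + 2*B)) ≤ μ/8 := hLr.trans (min_le_left _ _)
    have hLr1 : L * (h * (D + 2*B)) ≤ 1/8 := hLr.trans (min_le_right _ _)
    have hrr₀ : h * (D + 2*B) ≤ r₀/2 := (le_div_iff₀ hDB).mp hmain2
    set r := h * (D + 2*B) with hrdef
    set a := s' - h with hadef
    set b := s' + h with hbdef
    set ρ := δ₁ * h with hρdef
    have hρpos : 0 < ρ := mul_pos hδ₁pos hh0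
    have hρh : ρ ≤ h / 4 := by
      have := mul_le_mul_of_nonneg_right hδ₁le hh0.le
      rw [hρdef]; linarith
    have h2hρ : 0 < 2*h - ρ := by linarith
    have ha0 : 0 ≤ a := by rw [hadef]; linarith
    have has : a ≤ s' := by rw [hadef]; linarith
    have he₁a : ‖deriv x₁ a - f (x₁ a)‖ ≤ ε := hx₁b a ⟨ha0, has⟩
    have he₂h : ‖deriv x₂ h - f (x₂ h)‖ ≤ ε := hx₂b h ⟨hh0.le, hht'.le⟩
    have hAz : ‖x₁ a - z‖ ≤ h * (‖deriv x₁ s'‖ + 1) := by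
      have hd1h : δ₁ * h ≤ 1 * h := mul_le_mul_of_nonneg_right (by linarith) hh0.le
      calc ‖x₁ a - z‖ = ‖(x₁ a - z + h • deriv x₁ s') - h • deriv x₁ s'‖ := by
            rw [add_sub_cancel_right]
        _ ≤ ‖x₁ a - z + h • deriv x₁ s'‖ + ‖h • deriv x₁ s'‖ := norm_sub_le _ _
        _ ≤ δ₁ * h + h * ‖deriv x₁ s'‖ := by
            rw [norm_smul, Real.norm_eq_abs, abs_of_pos hh0]
            exact add_le_add hev₁ le_rfl
        _ ≤ h * (‖deriv x₁ s'‖ + 1) := by linarith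
    have hXz : ‖x₂ h - z‖ ≤ h * (‖deriv x₂ 0‖ + 1) := by
      have hd1h : δ₁ * h ≤ 1 * h := mul_le_mul_of_nonneg_right (by linarith) hh0.le
      calc ‖x₂ h - z‖ = ‖(x₂ h - z - h • deriv x₂ 0) + h • deriv x₂ 0‖ := by
            rw [sub_add_cancel]
        _ ≤ ‖x₂ h - z - h • deriv x₂ 0‖ + ‖h • deriv x₂ 0‖ := norm_add_le _ _
        _ ≤ δ₁ * h + h * ‖deriv x₂ 0‖ := by
            rw [norm_smul, Real.norm_eq_abs, abs_of_pos hh0]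
            exact add_le_add hev₂ le_rfl
        _ ≤ h * (‖deriv x₂ 0‖ + 1) := by linarith
    have hd1D : h * (‖deriv x₁ s'‖ + 1) ≤ r := by
      have h6 : ‖deriv x₁ s'‖ + 1 ≤ D + 2*B := by
        rw [hDdef]; linarith [norm_nonneg (deriv x₂ 0), hB1]
      rw [hrdef]; exact mul_le_mul_of_nonneg_left h6 hh0.le
    have hd2D : h * (‖deriv x₂ 0‖ + 1) ≤ r := by
      have h6 : ‖deriv x₂ 0‖ + 1 ≤ D + 2*B := by
        rw [hDdef]; linarith [norm_nonneg (deriv x₁ s'), hB1]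
      rw [hrdef]; exact mul_le_mul_of_nonneg_left h6 hh0.le
    have hball₁ : ‖x₁ a - z‖ ≤ r₀/2 := hAz.trans (hd1D.trans hrr₀)
    have hball₂ : ‖x₂ h - z‖ ≤ r₀/2 := hXz.trans (hd2D.trans hrr₀)
    have hballz : ‖z - z‖ ≤ r₀/2 := by simp; positivity
    set Gl := deriv x₁ a - f z with hGldef
    set Gr := deriv x₂ h - f z with hGrdef
    have hLr8 : L * r ≤ μ/8 := hLrμ
    have hLr18 : L * r ≤ 1/8 := hLr1
    have hGl : ‖Gl‖ ≤ ε + 1 := by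
      have h6 : Gl = (deriv x₁ a - f (x₁ a)) + (f (x₁ a) - f z) := by rw [hGldef]; abel
      have h7 : ‖f (x₁ a) - f z‖ ≤ L * ‖x₁ a - z‖ := hLip _ _ hball₁ hballz
      have h8 : L * ‖x₁ a - z‖ ≤ L * r :=
        mul_le_mul_of_nonneg_left (hAz.trans hd1D) hL0
      calc ‖Gl‖ ≤ ‖deriv x₁ a - f (x₁ a)‖ + ‖f (x₁ a) - f z‖ := by rw [h6]; exact norm_add_le _ _
        _ ≤ ε + 1 := by linarith
    have hGr : ‖Gr‖ ≤ ε + 1 := by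
      have h6 : Gr = (deriv x₂ h - f (x₂ h)) + (f (x₂ h) - f z) := by rw [hGrdef]; abel
      have h7 : ‖f (x₂ h) - f z‖ ≤ L * ‖x₂ h - z‖ := hLip _ _ hball₂ hballz
      have h8 : L * ‖x₂ h - z‖ ≤ L * r :=
        mul_le_mul_of_nonneg_left (hXz.trans hd2D) hL0
      calc ‖Gr‖ ≤ ‖deriv x₂ h - f (x₂ h)‖ + ‖f (x₂ h) - f z‖ := by rw [h6]; exact norm_add_le _ _
        _ ≤ ε + 1 := by linarith
    set cs := (2*h - ρ)⁻¹ • (x₂ h - x₁ a - (2*h) • f z - (ρ/2) • (Gl + Gr)) with hcsdef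
    have key : (2*h - ρ) • cs = x₂ h - x₁ a - (2*h) • f z - (ρ/2) • (Gl + Gr) := by
      rw [hcsdef]; exact smul_inv_smul₀ (ne_of_gt h2hρ) _
    have hW : ‖x₂ h - x₁ a - (2*h) • f z‖ ≤ h * ν + 2*(δ₁*h) := by
      have h8 : x₂ h - x₁ a - (2*h) • f z
          = ((x₂ h - z - h • deriv x₂ 0) - (x₁ a - z + h • deriv x₁ s'))
            + h • ((deriv x₁ s' - f z) + (deriv x₂ 0 - f z)) := by module
      rw [h8]
      have h9 : ‖(x₂ h - z - h • deriv x₂ 0) - (x₁ a - z + h • deriv x₁ s')‖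
          ≤ δ₁*h + δ₁*h := (norm_sub_le _ _).trans (add_le_add hev₂ hev₁)
      have h10 : ‖h • ((deriv x₁ s' - f z) + (deriv x₂ 0 - f z))‖ = h * ν := by
        rw [norm_smul, Real.norm_eq_abs, abs_of_pos hh0, hνdef]
      calc ‖_ + _‖ ≤ ‖(x₂ h - z - h • deriv x₂ 0) - (x₁ a - z + h • deriv x₁ s')‖
            + ‖h • ((deriv x₁ s' - f z) + (deriv x₂ 0 - f z))‖ := norm_add_le _ _
        _ ≤ h * ν + 2*(δ₁*h) := by rw [h10]; linarith
    have hcs : ‖cs‖ ≤ ε - μ/2 := by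
      have h9 : ‖(2*h-ρ) • cs‖ = (2*h-ρ) * ‖cs‖ := by
        rw [norm_smul, Real.norm_eq_abs, abs_of_pos h2hρ]
      have h11 : ‖(ρ/2) • (Gl + Gr)‖ ≤ (ρ/2) * (2*(ε+1)) := by
        rw [norm_smul, Real.norm_eq_abs, abs_of_pos (by linarith : (0:ℝ) < ρ/2)]
        have h12 := (norm_add_le Gl Gr).trans (add_le_add hGl hGr)
        have h13 : ‖Gl + Gr‖ ≤ 2*(ε+1) := by linarith
        exact mul_le_mul_of_nonneg_left h13 (by positivity)
      have h10 : (2*h-ρ) * ‖cs‖ ≤ h * ν + 2*(δ₁*h) + (ρ/2)*(2*(ε+1)) := by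
        rw [← h9, key]
        calc ‖x₂ h - x₁ a - (2*h) • f z - (ρ/2) • (Gl + Gr)‖
            ≤ ‖x₂ h - x₁ a - (2*h) • f z‖ + ‖(ρ/2) • (Gl + Gr)‖ := norm_sub_le _ _
          _ ≤ h * ν + 2*(δ₁*h) + (ρ/2)*(2*(ε+1)) := by linarith
      have hνeq : ν = 2*ε - 2*μ := by rw [hμdef]; ring
      have hδ₁2 : δ₁ * (2 * (3 + 2*ε)) ≤ μ :=
        (le_div_iff₀ (by positivity : (0:ℝ) < 2 * (3 + 2*ε))).mp hδ₁le2
      have k1 : δ₁*(3+2*ε) ≤ μ/2 := by linarith [hδ₁2]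
      have hstep : h * ν + 2*(δ₁*h) + (ρ/2)*(2*(ε+1)) ≤ (ε - μ/2) * (2*h - ρ) := by
        rw [hρdef]
        exact scalar_cs hh0 hμpos hδ₁pos hνeq k1
      have hfin : ‖cs‖ * (2*h - ρ) ≤ (ε - μ/2) * (2*h - ρ) := by
        calc ‖cs‖ * (2*h-ρ) = (2*h-ρ) * ‖cs‖ := by ring
          _ ≤ h * ν + 2*(δ₁*h) + (ρ/2)*(2*(ε+1)) := h10
          _ ≤ (ε - μ/2) * (2*h - ρ) := hstep
      exact le_of_mul_le_mul_right hfin h2hρ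
    -- piece curves of the bridge
    have hB0 : (0:ℝ) ≤ B := by linarith
    have hcsB : ‖cs‖ ≤ ε + 1 := by linarith
    set P₁ : ℝ → EuclideanSpace ℝ (Fin n) := fun w =>
      x₁ a + (w - a) • f z + ((w-a) - (w-a)^2/(2*ρ)) • Gl + ((w-a)^2/(2*ρ)) • cs with hP₁def
    set P₂ : ℝ → EuclideanSpace ℝ (Fin n) := fun w =>
      x₁ a + (w - a) • f z + (ρ/2) • Gl + ((w - a) - ρ/2) • cs with hP₂def
    set P₃ : ℝ → EuclideanSpace ℝ (Fin n) := fun w =>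
      x₂ h - (b - w) • f z - ((b-w) - (b-w)^2/(2*ρ)) • Gr - ((b-w)^2/(2*ρ)) • cs with hP₃def
    have h2ρ0 : (0:ℝ) < 2*ρ := by linarith
    clear_value ν μ L δ₁ B D κ r a b ρ Gl Gr cs P₁ P₂ P₃
    have hP₁d : ∀ w, HasDerivAt P₁ (f z + (1 - (w-a)/ρ) • Gl + ((w-a)/ρ) • cs) w := by
      intro w
      have hq : HasDerivAt (fun w : ℝ => w - a) 1 w := (hasDerivAt_id w).sub_const a
      have h1 : HasDerivAt (fun w : ℝ => (w - a) • f z) ((1:ℝ) • f z) w := hq.smul_const _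
      have hsq : HasDerivAt (fun w : ℝ => (w-a)^2) (2*(w-a)) w := by
        have h2 := hq.pow 2
        norm_num at h2
        exact h2
      have h2 : HasDerivAt (fun w : ℝ => (w-a) - (w-a)^2/(2*ρ)) (1 - (w-a)/ρ) w := by
        have h3 := hq.sub (hsq.div_const (2*ρ))
        refine h3.congr_deriv ?_
        field_simp
      have h3 : HasDerivAt (fun w : ℝ => (w-a)^2/(2*ρ)) ((w-a)/ρ) w := by
        have h4 := hsq.div_const (2*ρ)
        refine h4.congr_deriv ?_
        field_simp
      have h4 := (((hasDerivAt_const w (x₁ a)).add h1).add (h2.smul_const Gl)).add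
        (h3.smul_const cs)
      rw [hP₁def]
      refine h4.congr_deriv ?_
      rw [one_smul, zero_add]
    have hP₂d : ∀ w, HasDerivAt P₂ (f z + cs) w := by
      intro w
      have hq : HasDerivAt (fun w : ℝ => w - a) 1 w := (hasDerivAt_id w).sub_const a
      have h1 : HasDerivAt (fun w : ℝ => (w - a) • f z) ((1:ℝ) • f z) w := hq.smul_const _
      have h2 : HasDerivAt (fun w : ℝ => ((w - a) - ρ/2) • cs) ((1:ℝ) • cs) w :=
        (hq.sub_const (ρ/2)).smul_const _
      have h4 := (((hasDerivAt_const w (x₁ a)).add h1).add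
        (hasDerivAt_const w ((ρ/2) • Gl))).add h2
      rw [hP₂def]
      refine h4.congr_deriv ?_
      rw [one_smul, one_smul, zero_add, add_zero]
    have hP₃d : ∀ w, HasDerivAt P₃ (f z + (1 - (b-w)/ρ) • Gr + ((b-w)/ρ) • cs) w := by
      intro w
      have hq : HasDerivAt (fun w : ℝ => b - w) (-1) w := by
        exact ((hasDerivAt_const w b).sub (hasDerivAt_id w)).congr_deriv (by simp)
      have h1 : HasDerivAt (fun w : ℝ => (b - w) • f z) ((-1:ℝ) • f z) w := hq.smul_const _
      have hsq : HasDerivAt (fun w : ℝ => (b-w)^2) (2*(b-w)*(-1)) w := by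
        have h2 := hq.pow 2
        norm_num at h2
        refine h2.congr_deriv ?_
        ring
      have h2 : HasDerivAt (fun w : ℝ => (b-w) - (b-w)^2/(2*ρ)) (-(1 - (b-w)/ρ)) w := by
        have h3 := hq.sub (hsq.div_const (2*ρ))
        refine h3.congr_deriv ?_
        field_simp
        ring
      have h3 : HasDerivAt (fun w : ℝ => (b-w)^2/(2*ρ)) (-((b-w)/ρ)) w := by
        have h4 := hsq.div_const (2*ρ)
        refine h4.congr_deriv ?_
        field_simp
      have h4 := (((hasDerivAt_const w (x₂ h)).sub h1).sub (h2.smul_const Gr)).sub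
        (h3.smul_const cs)
      rw [hP₃def]
      refine h4.congr_deriv ?_
      rw [neg_smul, neg_smul, neg_smul, one_smul]
      module
    -- deviation bounds
    have hdevP₁ : ∀ u, a ≤ u → u ≤ a + ρ → ‖P₁ u - x₁ a‖ ≤ (u - a) * B := by
      intro u h1 h2
      have hw0 : (0:ℝ) ≤ u - a := by linarith
      have hwρ : u - a ≤ ρ := by linarith
      have hc1 : (0:ℝ) ≤ (u-a)^2/(2*ρ) := by positivity
      have hc2 : (u-a)^2/(2*ρ) ≤ (u-a) := by
        rw [div_le_iff₀ h2ρ0]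
        have e1 : (u-a)*(u-a) ≤ (u-a)*ρ := mul_le_mul_of_nonneg_left hwρ hw0
        have e2 : (u-a)*ρ ≤ (u-a)*(2*ρ) := mul_le_mul_of_nonneg_left (by linarith) hw0
        calc (u-a)^2 = (u-a)*(u-a) := sq (u-a) ▸ by ring
          _ ≤ (u-a)*(2*ρ) := e1.trans e2
      have hv : P₁ u - x₁ a = (u - a) • f z + (((u-a) - (u-a)^2/(2*ρ)) • Gl
          + ((u-a)^2/(2*ρ)) • cs) := by
        simp only [hP₁def]; abel
      rw [hv]
      have n1 : ‖(u - a) • f z‖ ≤ (u-a) * ‖f z‖ :=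
        norm_smul_le_of_le hw0 le_rfl
      have n2 : ‖((u-a) - (u-a)^2/(2*ρ)) • Gl‖ ≤ ((u-a) - (u-a)^2/(2*ρ)) * (ε+1) :=
        norm_smul_le_of_le (by linarith) hGl
      have n3 : ‖((u-a)^2/(2*ρ)) • cs‖ ≤ ((u-a)^2/(2*ρ)) * (ε+1) :=
        norm_smul_le_of_le hc1 hcsB
      calc ‖_ + (_ + _)‖ ≤ ‖(u - a) • f z‖ + (‖((u-a) - (u-a)^2/(2*ρ)) • Gl‖
            + ‖((u-a)^2/(2*ρ)) • cs‖) := (norm_add_le _ _).trans (by gcongr; exact norm_add_le _ _)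
        _ ≤ (u-a) * ‖f z‖ + (((u-a) - (u-a)^2/(2*ρ)) * (ε+1) + ((u-a)^2/(2*ρ)) * (ε+1)) :=
            add_le_add n1 (add_le_add n2 n3)
        _ = (u-a) * B := by rw [hBdef]; ring
    have hdevP₂ : ∀ u, a + ρ ≤ u → u ≤ b - ρ → ‖P₂ u - x₁ a‖ ≤ (u - a) * B := by
      intro u h1 h2
      have hw0 : (0:ℝ) ≤ u - a := by linarith
      have hρ2 : (0:ℝ) ≤ ρ/2 := by linarith
      have hwρ : ρ/2 ≤ u - a := by linarith
      have hv : P₂ u - x₁ a = (u - a) • f z + ((ρ/2) • Gl + ((u - a) - ρ/2) • cs) := by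
        simp only [hP₂def]; abel
      rw [hv]
      have n1 : ‖(u - a) • f z‖ ≤ (u-a) * ‖f z‖ := norm_smul_le_of_le hw0 le_rfl
      have n2 : ‖(ρ/2) • Gl‖ ≤ (ρ/2) * (ε+1) := norm_smul_le_of_le hρ2 hGl
      have n3 : ‖((u - a) - ρ/2) • cs‖ ≤ ((u-a) - ρ/2) * (ε+1) :=
        norm_smul_le_of_le (by linarith) hcsB
      calc ‖_ + (_ + _)‖ ≤ ‖(u - a) • f z‖ + (‖(ρ/2) • Gl‖ + ‖((u - a) - ρ/2) • cs‖) :=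
            (norm_add_le _ _).trans (by gcongr; exact norm_add_le _ _)
        _ ≤ (u-a) * ‖f z‖ + ((ρ/2) * (ε+1) + ((u-a) - ρ/2) * (ε+1)) :=
            add_le_add n1 (add_le_add n2 n3)
        _ = (u-a) * B := by rw [hBdef]; ring
    have hdevP₃ : ∀ u, b - ρ ≤ u → u ≤ b → ‖P₃ u - x₂ h‖ ≤ (b - u) * B := by
      intro u h1 h2
      have hw0 : (0:ℝ) ≤ b - u := by linarith
      have hwρ : b - u ≤ ρ := by linarith
      have hc1 : (0:ℝ) ≤ (b-u)^2/(2*ρ) := by positivity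
      have hc2 : (b-u)^2/(2*ρ) ≤ (b-u) := by
        rw [div_le_iff₀ h2ρ0]
        have e1 : (b-u)*(b-u) ≤ (b-u)*ρ := mul_le_mul_of_nonneg_left hwρ hw0
        have e2 : (b-u)*ρ ≤ (b-u)*(2*ρ) := mul_le_mul_of_nonneg_left (by linarith) hw0
        calc (b-u)^2 = (b-u)*(b-u) := sq (b-u) ▸ by ring
          _ ≤ (b-u)*(2*ρ) := e1.trans e2
      have hv : P₃ u - x₂ h = -((b - u) • f z) + (-(((b-u) - (b-u)^2/(2*ρ)) • Gr)
          + -(((b-u)^2/(2*ρ)) • cs)) := by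
        simp only [hP₃def]; abel
      rw [hv]
      have n1 : ‖(b - u) • f z‖ ≤ (b-u) * ‖f z‖ := norm_smul_le_of_le hw0 le_rfl
      have n2 : ‖((b-u) - (b-u)^2/(2*ρ)) • Gr‖ ≤ ((b-u) - (b-u)^2/(2*ρ)) * (ε+1) :=
        norm_smul_le_of_le (by linarith) hGr
      have n3 : ‖((b-u)^2/(2*ρ)) • cs‖ ≤ ((b-u)^2/(2*ρ)) * (ε+1) :=
        norm_smul_le_of_le hc1 hcsB
      calc ‖_ + (_ + _)‖ ≤ ‖-((b - u) • f z)‖ + (‖-(((b-u) - (b-u)^2/(2*ρ)) • Gr)‖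
            + ‖-(((b-u)^2/(2*ρ)) • cs)‖) := (norm_add_le _ _).trans (by gcongr; exact norm_add_le _ _)
        _ = ‖(b - u) • f z‖ + (‖((b-u) - (b-u)^2/(2*ρ)) • Gr‖ + ‖((b-u)^2/(2*ρ)) • cs‖) := by
            rw [norm_neg, norm_neg, norm_neg]
        _ ≤ (b-u) * ‖f z‖ + (((b-u) - (b-u)^2/(2*ρ)) * (ε+1) + ((b-u)^2/(2*ρ)) * (ε+1)) :=
            add_le_add n1 (add_le_add n2 n3)
        _ = (b-u) * B := by rw [hBdef]; ring
    -- ball bounds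
    have hrsplit : r = h*D + 2*(h*B) := by rw [hrdef]; ring
    have hhd1D : h*(‖deriv x₁ s'‖+1) ≤ h*D :=
      mul_le_mul_of_nonneg_left (by rw [hDdef]; linarith [norm_nonneg (deriv x₂ 0)]) hh0.le
    have hhd2D : h*(‖deriv x₂ 0‖+1) ≤ h*D :=
      mul_le_mul_of_nonneg_left (by rw [hDdef]; linarith [norm_nonneg (deriv x₁ s')]) hh0.le
    have hball_of_dev₁ : ∀ p : EuclideanSpace ℝ (Fin n),
        ‖p - x₁ a‖ ≤ 2*(h*B) → ‖p - z‖ ≤ r := by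
      intro p hp
      have h1 : p - z = (p - x₁ a) + (x₁ a - z) := by abel
      calc ‖p - z‖ ≤ ‖p - x₁ a‖ + ‖x₁ a - z‖ := by rw [h1]; exact norm_add_le _ _
        _ ≤ 2*(h*B) + h*(‖deriv x₁ s'‖+1) := add_le_add hp hAz
        _ ≤ r := by rw [hrsplit]; linarith
    have hball_of_dev₂ : ∀ p : EuclideanSpace ℝ (Fin n),
        ‖p - x₂ h‖ ≤ 2*(h*B) → ‖p - z‖ ≤ r := by
      intro p hp
      have h1 : p - z = (p - x₂ h) + (x₂ h - z) := by abel
      calc ‖p - z‖ ≤ ‖p - x₂ h‖ + ‖x₂ h - z‖ := by rw [h1]; exact norm_add_le _ _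
        _ ≤ 2*(h*B) + h*(‖deriv x₂ 0‖+1) := add_le_add hp hXz
        _ ≤ r := by rw [hrsplit]; linarith
    have hcoef2h : ∀ w : ℝ, 0 ≤ w → w ≤ 2*h → w * B ≤ 2*(h*B) := by
      intro w h1 h2
      calc w * B ≤ (2*h) * B := mul_le_mul_of_nonneg_right h2 hB0
        _ = 2*(h*B) := by ring
    have hLρB : L*(ρ*B) ≤ μ/16 := by
      have hD0 : (0:ℝ) ≤ D := by
        rw [hDdef]; positivity
      have hhB0 : (0:ℝ) ≤ h*B := mul_nonneg hh0.le hB0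
      have e1 : ρ*B ≤ h*B := mul_le_mul_of_nonneg_right (by linarith) hB0
      have e2 : 2*(h*B) ≤ r := by
        rw [hrsplit]; linarith [mul_nonneg hh0.le hD0]
      have e3 : L*(ρ*B) ≤ L*(h*B) := mul_le_mul_of_nonneg_left e1 hL0
      have e4 : L*(2*(h*B)) ≤ L*r := mul_le_mul_of_nonneg_left e2 hL0
      have e5 : L*(2*(h*B)) = 2*(L*(h*B)) := by ring
      have e6 : (0:ℝ) ≤ L*(h*B) := mul_nonneg hL0 hhB0
      have e7 : 2*(L*(h*B)) ≤ μ/8 := by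
        rw [← e5]
        exact e4.trans hLr8
      linarith [e3, e7]
    -- ramp 1 estimate
    have hramp₁ : ∀ u, a ≤ u → u ≤ a + ρ →
        ‖(f z + (1 - (u-a)/ρ) • Gl + ((u-a)/ρ) • cs) - f (P₁ u)‖ ≤ ε := by
      intro u h1 h2
      have hθ0 : (0:ℝ) ≤ (u-a)/ρ := div_nonneg (by linarith) hρpos.le
      have hθ1 : (u-a)/ρ ≤ 1 := by rw [div_le_one hρpos]; linarith
      have hdev := hdevP₁ u h1 h2
      have hPz : ‖P₁ u - z‖ ≤ r :=
        hball_of_dev₁ _ (hdev.trans (hcoef2h _ (by linarith) (by linarith)))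
      have hPball : ‖P₁ u - z‖ ≤ r₀/2 := hPz.trans hrr₀
      have split : (f z + (1 - (u-a)/ρ) • Gl + ((u-a)/ρ) • cs) - f (P₁ u)
          = (1-(u-a)/ρ) • (deriv x₁ a - f (P₁ u)) + ((u-a)/ρ) • ((f z + cs) - f (P₁ u)) := by
        rw [hGldef]; module
      rw [split]
      have n1 : ‖deriv x₁ a - f (P₁ u)‖ ≤ ε + L*((u-a)*B) := by
        have hsp : deriv x₁ a - f (P₁ u) = (deriv x₁ a - f (x₁ a)) + (f (x₁ a) - f (P₁ u)) := by
          abel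
        rw [hsp]
        have h7 := hLip (x₁ a) (P₁ u) hball₁ hPball
        have h8 : ‖x₁ a - P₁ u‖ = ‖P₁ u - x₁ a‖ := norm_sub_rev _ _
        have h9 : L * ‖x₁ a - P₁ u‖ ≤ L * ((u-a)*B) := by
          rw [h8]; exact mul_le_mul_of_nonneg_left hdev hL0
        calc ‖_ + _‖ ≤ ‖deriv x₁ a - f (x₁ a)‖ + ‖f (x₁ a) - f (P₁ u)‖ := norm_add_le _ _
          _ ≤ ε + L*((u-a)*B) := by linarith
      have n2 : ‖(f z + cs) - f (P₁ u)‖ ≤ ε - 3*μ/8 := by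
        have hsp : (f z + cs) - f (P₁ u) = cs + (f z - f (P₁ u)) := by abel
        rw [hsp]
        have h7 := hLip z (P₁ u) hballz hPball
        have h8 : ‖z - P₁ u‖ = ‖P₁ u - z‖ := norm_sub_rev _ _
        have h9 : L * ‖z - P₁ u‖ ≤ L * r := by
          rw [h8]; exact mul_le_mul_of_nonneg_left hPz hL0
        calc ‖_ + _‖ ≤ ‖cs‖ + ‖f z - f (P₁ u)‖ := norm_add_le _ _
          _ ≤ (ε - μ/2) + μ/8 := by linarith
          _ = ε - 3*μ/8 := by ring
      have m1 : ‖(1-(u-a)/ρ) • (deriv x₁ a - f (P₁ u))‖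
          ≤ (1-(u-a)/ρ) * (ε + L*((u-a)*B)) := norm_smul_le_of_le (by linarith) n1
      have m2 : ‖((u-a)/ρ) • ((f z + cs) - f (P₁ u))‖
          ≤ ((u-a)/ρ) * (ε - 3*μ/8) := norm_smul_le_of_le hθ0 n2
      have hw : u - a = ((u-a)/ρ)*ρ := by field_simp
      calc ‖_ + _‖ ≤ ‖(1-(u-a)/ρ) • (deriv x₁ a - f (P₁ u))‖
            + ‖((u-a)/ρ) • ((f z + cs) - f (P₁ u))‖ := norm_add_le _ _
        _ ≤ (1-(u-a)/ρ) * (ε + L*((u-a)*B)) + ((u-a)/ρ) * (ε - 3*μ/8) := by linarith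
        _ ≤ ε := scalar_ramp hθ0 hθ1 hw hLρB hL0 hB0 (by linarith) hμpos.le
    -- middle estimate
    have hmid : ∀ u, a + ρ ≤ u → u ≤ b - ρ → ‖(f z + cs) - f (P₂ u)‖ ≤ ε := by
      intro u h1 h2
      have hba : b - ρ - a = 2*h - ρ := by rw [hadef, hbdef]; ring
      have hdev := hdevP₂ u h1 h2
      have hPz : ‖P₂ u - z‖ ≤ r :=
        hball_of_dev₁ _ (hdev.trans (hcoef2h _ (by linarith) (by linarith)))
      have hPball : ‖P₂ u - z‖ ≤ r₀/2 := hPz.trans hrr₀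
      have hsp : (f z + cs) - f (P₂ u) = cs + (f z - f (P₂ u)) := by abel
      rw [hsp]
      have h7 := hLip z (P₂ u) hballz hPball
      have h8 : ‖z - P₂ u‖ = ‖P₂ u - z‖ := norm_sub_rev _ _
      have h9 : L * ‖z - P₂ u‖ ≤ L * r := by
        rw [h8]; exact mul_le_mul_of_nonneg_left hPz hL0
      calc ‖_ + _‖ ≤ ‖cs‖ + ‖f z - f (P₂ u)‖ := norm_add_le _ _
        _ ≤ (ε - μ/2) + μ/8 := by linarith
        _ ≤ ε := by linarith
    -- ramp 2 estimate
    have hramp₂ : ∀ u, b - ρ ≤ u → u ≤ b →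
        ‖(f z + (1 - (b-u)/ρ) • Gr + ((b-u)/ρ) • cs) - f (P₃ u)‖ ≤ ε := by
      intro u h1 h2
      have hθ0 : (0:ℝ) ≤ (b-u)/ρ := div_nonneg (by linarith) hρpos.le
      have hθ1 : (b-u)/ρ ≤ 1 := by rw [div_le_one hρpos]; linarith
      have hdev := hdevP₃ u h1 h2
      have hPz : ‖P₃ u - z‖ ≤ r :=
        hball_of_dev₂ _ (hdev.trans (hcoef2h _ (by linarith) (by linarith)))
      have hPball : ‖P₃ u - z‖ ≤ r₀/2 := hPz.trans hrr₀
      have split : (f z + (1 - (b-u)/ρ) • Gr + ((b-u)/ρ) • cs) - f (P₃ u)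
          = (1-(b-u)/ρ) • (deriv x₂ h - f (P₃ u)) + ((b-u)/ρ) • ((f z + cs) - f (P₃ u)) := by
        rw [hGrdef]; module
      rw [split]
      have n1 : ‖deriv x₂ h - f (P₃ u)‖ ≤ ε + L*((b-u)*B) := by
        have hsp : deriv x₂ h - f (P₃ u) = (deriv x₂ h - f (x₂ h)) + (f (x₂ h) - f (P₃ u)) := by
          abel
        rw [hsp]
        have h7 := hLip (x₂ h) (P₃ u) hball₂ hPball
        have h8 : ‖x₂ h - P₃ u‖ = ‖P₃ u - x₂ h‖ := norm_sub_rev _ _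
        have h9 : L * ‖x₂ h - P₃ u‖ ≤ L * ((b-u)*B) := by
          rw [h8]; exact mul_le_mul_of_nonneg_left hdev hL0
        calc ‖_ + _‖ ≤ ‖deriv x₂ h - f (x₂ h)‖ + ‖f (x₂ h) - f (P₃ u)‖ := norm_add_le _ _
          _ ≤ ε + L*((b-u)*B) := by linarith
      have n2 : ‖(f z + cs) - f (P₃ u)‖ ≤ ε - 3*μ/8 := by
        have hsp : (f z + cs) - f (P₃ u) = cs + (f z - f (P₃ u)) := by abel
        rw [hsp]
        have h7 := hLip z (P₃ u) hballz hPball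
        have h8 : ‖z - P₃ u‖ = ‖P₃ u - z‖ := norm_sub_rev _ _
        have h9 : L * ‖z - P₃ u‖ ≤ L * r := by
          rw [h8]; exact mul_le_mul_of_nonneg_left hPz hL0
        calc ‖_ + _‖ ≤ ‖cs‖ + ‖f z - f (P₃ u)‖ := norm_add_le _ _
          _ ≤ (ε - μ/2) + μ/8 := by linarith
          _ = ε - 3*μ/8 := by ring
      have m1 : ‖(1-(b-u)/ρ) • (deriv x₂ h - f (P₃ u))‖
          ≤ (1-(b-u)/ρ) * (ε + L*((b-u)*B)) := norm_smul_le_of_le (by linarith) n1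
      have m2 : ‖((b-u)/ρ) • ((f z + cs) - f (P₃ u))‖
          ≤ ((b-u)/ρ) * (ε - 3*μ/8) := norm_smul_le_of_le hθ0 n2
      have hw : b - u = ((b-u)/ρ)*ρ := by field_simp
      calc ‖_ + _‖ ≤ ‖(1-(b-u)/ρ) • (deriv x₂ h - f (P₃ u))‖
            + ‖((b-u)/ρ) • ((f z + cs) - f (P₃ u))‖ := norm_add_le _ _
        _ ≤ (1-(b-u)/ρ) * (ε + L*((b-u)*B)) + ((b-u)/ρ) * (ε - 3*μ/8) := by linarith
        _ ≤ ε := scalar_ramp hθ0 hθ1 hw hLρB hL0 hB0 (by linarith) hμpos.le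
    -- seam values and derivatives
    have hρne : ρ ≠ 0 := ne_of_gt hρpos
    have e_half : ρ - ρ/2 = ρ/2 := by ring
    have e_sq : ρ^2/(2*ρ) = ρ/2 := by
      field_simp
    have hseam_a_val : x₁ a = P₁ a := by
      simp only [hP₁def]
      simp
    have hP₁deriv_a : deriv P₁ a = deriv x₁ a := by
      rw [(hP₁d a).deriv]
      simp [hGldef]
    have e_aρ : a + ρ - a = ρ := by ring
    have hP₁_aρ : P₁ (a+ρ) = x₁ a + ρ • f z + (ρ/2) • Gl + (ρ/2) • cs := by
      simp only [hP₁def]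
      rw [e_aρ, e_sq, e_half]
    have hP₂_aρ : P₂ (a+ρ) = x₁ a + ρ • f z + (ρ/2) • Gl + (ρ/2) • cs := by
      simp only [hP₂def]
      rw [e_aρ, e_half]
    have hseam₁ : P₁ (a+ρ) = P₂ (a+ρ) := by rw [hP₁_aρ, hP₂_aρ]
    have hP₁deriv_aρ : deriv P₁ (a+ρ) = f z + cs := by
      rw [(hP₁d _).deriv, e_aρ]
      simp [div_self hρne]
    have hP₂deriv : ∀ w, deriv P₂ w = f z + cs := fun w => (hP₂d w).deriv
    have e_bρa : b - ρ - a = 2*h - ρ := by rw [hadef, hbdef]; ring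
    have e_bbρ : b - (b - ρ) = ρ := by ring
    have hP₂_bρ : P₂ (b-ρ) = x₁ a + (2*h-ρ) • f z + (ρ/2) • Gl + ((2*h-ρ) - ρ/2) • cs := by
      simp only [hP₂def]
      rw [e_bρa]
    have hP₃_bρ : P₃ (b-ρ) = x₂ h - ρ • f z - (ρ/2) • Gr - (ρ/2) • cs := by
      simp only [hP₃def]
      rw [e_bbρ, e_sq, e_half]
    have hseam₂ : P₂ (b-ρ) = P₃ (b-ρ) := by
      rw [hP₂_bρ, hP₃_bρ]
      have key2 : x₂ h = (2*h-ρ) • cs + (x₁ a + (2*h) • f z + (ρ/2) • (Gl + Gr)) := by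
        rw [key]
        abel
      rw [key2]
      module
    have hP₃deriv_bρ : deriv P₃ (b-ρ) = f z + cs := by
      rw [(hP₃d _).deriv, e_bbρ]
      simp [div_self hρne]
    have e_bs : b - s' = h := by rw [hbdef]; ring
    have hP₃_b : P₃ b = x₂ h := by
      simp only [hP₃def]
      simp
    have hx₂s_b : (fun u => x₂ (u - s')) b = x₂ h := by
      show x₂ (b - s') = x₂ h
      rw [e_bs]
    have hP₃deriv_b : deriv P₃ b = deriv x₂ h := by
      rw [(hP₃d b).deriv]
      simp [hGrdef]
    have hx₂sderiv_b : deriv (fun u => x₂ (u - s')) b = deriv x₂ h := by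
      rw [(hx₂s' b).deriv, e_bs]
    have hP₁diff : Differentiable ℝ P₁ := fun w => (hP₁d w).differentiableAt
    have hP₂diff : Differentiable ℝ P₂ := fun w => (hP₂d w).differentiableAt
    have hP₃diff : Differentiable ℝ P₃ := fun w => (hP₃d w).differentiableAt
    -- glue stack
    have hQ₃ := pc_hasDerivAt hP₃diff hx₂sd (hP₃_b.trans hx₂s_b.symm)
      (hP₃deriv_b.trans hx₂sderiv_b.symm)
    have hQ₃diff : Differentiable ℝ (pc b P₃ fun u => x₂ (u - s')) :=
      fun w => (hQ₃ w).differentiableAt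
    have hQ₃val_bρ : pc b P₃ (fun u => x₂ (u - s')) (b-ρ) = P₃ (b-ρ) := by
      simp only [pc]
      rw [if_pos (by linarith : b - ρ ≤ b)]
    have hQ₃deriv_bρ : deriv (pc b P₃ fun u => x₂ (u - s')) (b-ρ) = f z + cs := by
      rw [(hQ₃ (b-ρ)).deriv, if_pos (by linarith : b - ρ ≤ b), hP₃deriv_bρ]
    have hQ₂ := pc_hasDerivAt hP₂diff hQ₃diff (hseam₂.trans hQ₃val_bρ.symm)
      (by rw [hQ₃deriv_bρ, hP₂deriv])
    have hQ₂diff : Differentiable ℝ (pc (b-ρ) P₂ (pc b P₃ fun u => x₂ (u - s'))) :=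
      fun w => (hQ₂ w).differentiableAt
    have haρbρ : a + ρ ≤ b - ρ := by
      rw [hadef, hbdef]; linarith
    have hQ₂val_aρ : pc (b-ρ) P₂ (pc b P₃ fun u => x₂ (u - s')) (a+ρ) = P₂ (a+ρ) := by
      simp only [pc]
      rw [if_pos haρbρ]
    have hQ₂deriv_aρ : deriv (pc (b-ρ) P₂ (pc b P₃ fun u => x₂ (u - s'))) (a+ρ)
        = f z + cs := by
      rw [(hQ₂ (a+ρ)).deriv, if_pos haρbρ, hP₂deriv]
    have hQ₁ := pc_hasDerivAt hP₁diff hQ₂diff (hseam₁.trans hQ₂val_aρ.symm)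
      (by rw [hQ₂deriv_aρ, hP₁deriv_aρ])
    have hQ₁diff : Differentiable ℝ
        (pc (a+ρ) P₁ (pc (b-ρ) P₂ (pc b P₃ fun u => x₂ (u - s')))) :=
      fun w => (hQ₁ w).differentiableAt
    have haaρ : a ≤ a + ρ := by linarith
    have hQ₁val_a : pc (a+ρ) P₁ (pc (b-ρ) P₂ (pc b P₃ fun u => x₂ (u - s'))) a = P₁ a := by
      simp only [pc]
      rw [if_pos haaρ]
    have hQ₁deriv_a : deriv (pc (a+ρ) P₁ (pc (b-ρ) P₂ (pc b P₃ fun u => x₂ (u - s')))) a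
        = deriv x₁ a := by
      rw [(hQ₁ a).deriv, if_pos haaρ, hP₁deriv_a]
    have hQ₀ := pc_hasDerivAt hx₁d hQ₁diff (hseam_a_val.trans hQ₁val_a.symm)
      hQ₁deriv_a.symm
    -- the witness
    refine ⟨s' + t', rfl,
      pc a x₁ (pc (a+ρ) P₁ (pc (b-ρ) P₂ (pc b P₃ fun u => x₂ (u - s')))),
      fun w => (hQ₀ w).differentiableAt, ?_, ?_, ?_⟩
    · simp only [pc]
      rw [if_pos ha0]
      exact hx₁0
    · have hn₁ : ¬ (s' + t' ≤ a) := by rw [hadef]; push_neg; linarith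
      have hn₂ : ¬ (s' + t' ≤ a + ρ) := by rw [hadef]; push_neg; linarith
      have hn₃ : ¬ (s' + t' ≤ b - ρ) := by rw [hbdef]; push_neg; linarith
      have hn₄ : ¬ (s' + t' ≤ b) := by rw [hbdef]; push_neg; linarith
      simp only [pc]
      rw [if_neg hn₁, if_neg hn₂, if_neg hn₃, if_neg hn₄]
      have e_st : s' + t' - s' = t' := by ring
      rw [e_st]
      exact hx₂t
    · intro u hu
      rw [(hQ₀ u).deriv]
      by_cases hc₁ : u ≤ a
      · rw [if_pos hc₁]
        have hval : pc a x₁ (pc (a+ρ) P₁ (pc (b-ρ) P₂ (pc b P₃ fun u => x₂ (u - s')))) u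
            = x₁ u := by
          simp only [pc]
          rw [if_pos hc₁]
        rw [hval]
        exact hx₁b u ⟨hu.1, by linarith⟩
      · rw [if_neg hc₁, (hQ₁ u).deriv]
        have hvalQ : pc a x₁ (pc (a+ρ) P₁ (pc (b-ρ) P₂ (pc b P₃ fun u => x₂ (u - s')))) u
            = pc (a+ρ) P₁ (pc (b-ρ) P₂ (pc b P₃ fun u => x₂ (u - s'))) u := by
          simp only [pc]
          rw [if_neg hc₁]
        rw [hvalQ]
        by_cases hc₂ : u ≤ a + ρ
        · rw [if_pos hc₂]
          have hval : pc (a+ρ) P₁ (pc (b-ρ) P₂ (pc b P₃ fun u => x₂ (u - s'))) u = P₁ u := by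
            simp only [pc]
            rw [if_pos hc₂]
          rw [hval, (hP₁d u).deriv]
          exact hramp₁ u (by linarith) hc₂
        · rw [if_neg hc₂, (hQ₂ u).deriv]
          have hvalQ₂ : pc (a+ρ) P₁ (pc (b-ρ) P₂ (pc b P₃ fun u => x₂ (u - s'))) u
              = pc (b-ρ) P₂ (pc b P₃ fun u => x₂ (u - s')) u := by
            simp only [pc]
            rw [if_neg hc₂]
          rw [hvalQ₂]
          by_cases hc₃ : u ≤ b - ρ
          · rw [if_pos hc₃]
            have hval : pc (b-ρ) P₂ (pc b P₃ fun u => x₂ (u - s')) u = P₂ u := by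
              simp only [pc]
              rw [if_pos hc₃]
            rw [hval, hP₂deriv]
            exact hmid u (by linarith) hc₃
          · rw [if_neg hc₃, (hQ₃ u).deriv]
            have hvalQ₃ : pc (b-ρ) P₂ (pc b P₃ fun u => x₂ (u - s')) u
                = pc b P₃ (fun u => x₂ (u - s')) u := by
              simp only [pc]
              rw [if_neg hc₃]
            rw [hvalQ₃]
            by_cases hc₄ : u ≤ b
            · rw [if_pos hc₄]
              have hval : pc b P₃ (fun u => x₂ (u - s')) u = P₃ u := by
                simp only [pc]
                rw [if_pos hc₄]
              rw [hval, (hP₃d u).deriv]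
              exact hramp₂ u (by linarith) hc₄
            · rw [if_neg hc₄]
              have hval : pc b P₃ (fun u => x₂ (u - s')) u = x₂ (u - s') := by
                simp only [pc]
                rw [if_neg hc₄]
              rw [hval, (hx₂s' u).deriv]
              refine hx₂b (u - s') ⟨?_, ?_⟩
              · rw [hbdef] at hc₄; push_neg at hc₄; linarith
              · linarith [hu.2]

end ReachAux

/-- If the ε-perturbed dynamics maps V into itself after time Δ, then the ε-reach set
of the bloated set R^{[0,Δ']}(V) stays within that bloated set, for any Δ' ≥ Δ. -/
theorem bloated_reach_set_invariant {n : ℕ}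
    (f : EuclideanSpace ℝ (Fin n) → EuclideanSpace ℝ (Fin n)) (hf : ContDiff ℝ (⊤ : ℕ∞) f)
    (ε Δ : ℝ) (hε : 0 < ε) (hΔ : 0 < Δ)
    (V : Set (EuclideanSpace ℝ (Fin n)))
    (hV : reach f ε {Δ} V ⊆ V) :
    ∀ Δ' ≥ Δ, reach f ε (Set.Ici 0) (reach f ε (Set.Icc 0 Δ') V) ⊆
      reach f ε (Set.Icc 0 Δ') V := by
  intro Δ' hΔ' y hy
  obtain ⟨t, ht, x, hxd, hx0, hxt, hxb⟩ := hy
  obtain ⟨s, hs, x₁, hx₁d, hx₁0, hx₁s, hx₁b⟩ := hx0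
  have hz : x 0 ∈ reach f ε {s} V := ⟨s, rfl, x₁, hx₁d, hx₁0, hx₁s, hx₁b⟩
  have hy' : y ∈ reach f ε {t} ({x 0} : Set (EuclideanSpace ℝ (Fin n))) :=
    ⟨t, rfl, x, hxd, rfl, hxt, hxb⟩
  have hst := ReachAux.reach_trans hf hε hs.1 ht hz hy'
  exact ReachAux.reach_to_bloat hΔ hΔ' hV (s + t) (add_nonneg hs.1 ht) hst
end
end
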